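/- arXiv:1005.3186 — 3 statements merged into one kernel-verified Lean document; each statement's English description precedes it below -/
import Mathlib

section
/- Let X be a Banach space and J ⊆ ℤ an interval. If a family of evolution operators T(n,m), n ≥ m in J, admits an exponential dichotomy on J with exponent β, bound M and projections P(n), then the adjoint family T*(m,n) := (T(n,m))* on the dual space X* admits a reverse exponential dichotomy on J with the same exponent β and bound M and with the projections P*(n) = (P(n))*. -/
open Set

variable {X : Type*} [NormedAddCommGroup X] [NormedSpace ℝ X] [CompleteSpace X]

/-- The evolution operators `T(n,m) = T_{n-1} ∘ ⋯ ∘ T_m` (for `n ≥ m`) associated with a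
family of one-step operators `T k = T(k+1,k)`. -/
noncomputable def evolOp (T : ℤ → X →L[ℝ] X) (n m : ℤ) : X →L[ℝ] X :=
  (List.range (n - m).toNat).foldl (fun A k => (T (m + k)).comp A) (ContinuousLinearMap.id ℝ X)

/-- A (discrete) exponential dichotomy on an interval `J ⊆ ℤ` with exponent `β`, bound `M`
and projections `P n`, for the evolution family generated by the one-step operators `T n`.
`P n` projects onto the unstable part: `(iii)` forward decay on the ranges of `I - P n`;
`(iv)` backward decay (`T(n,m)` is invertible from `R(P m)` onto `R(P n)` with inverse of
norm at most `M e^{-β(n-m)}`). -/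
structure ExpDichotomyOn (T : ℤ → X →L[ℝ] X) (J : Set ℤ) (β M : ℝ)
    (P : ℤ → X →L[ℝ] X) : Prop where
  beta_pos : 0 < β
  bound_pos : 0 < M
  isProj : ∀ n ∈ J, (P n).comp (P n) = P n
  commute : ∀ m ∈ J, ∀ n ∈ J, m ≤ n →
    (P n).comp (evolOp T n m) = (evolOp T n m).comp (P m)
  isoRange : ∀ m ∈ J, ∀ n ∈ J, m ≤ n →
    ⇑(evolOp T n m) '' Set.range (P m) = Set.range (P n)
  stable : ∀ m ∈ J, ∀ n ∈ J, m ≤ n → ∀ x : X,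
    ‖evolOp T n m (x - P m x)‖ ≤ M * Real.exp (-β * ((n - m : ℤ) : ℝ)) * ‖x‖
  unstable : ∀ m ∈ J, ∀ n ∈ J, m ≤ n → ∀ x w : X, w ∈ Set.range (P m) →
    evolOp T n m w = P n x → ‖w‖ ≤ M * Real.exp (-β * ((n - m : ℤ) : ℝ)) * ‖x‖

/-- The dichotomy with projections `P` has finite rank `k` on `J`. -/
def DichotomyRankOn (P : ℤ → X →L[ℝ] X) (J : Set ℤ) (k : ℕ) : Prop :=
  ∀ n ∈ J, FiniteDimensional ℝ (LinearMap.range (P n : X →ₗ[ℝ] X)) ∧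
    Module.finrank ℝ (LinearMap.range (P n : X →ₗ[ℝ] X)) = k

/-- The Banach-space adjoint (dual map) of a continuous linear operator. -/
noncomputable def dualOp (f : X →L[ℝ] X) :
    StrongDual ℝ X →L[ℝ] StrongDual ℝ X :=
  (ContinuousLinearMap.compL ℝ X X ℝ).flip f

/-- The backward evolution operators `S(m,n) = S_m ∘ S_{m+1} ∘ ⋯ ∘ S_{n-1}` (for `m ≤ n`)
associated with a family of one-step operators; for `S k = (T k)*` this gives the adjoint
evolution family `T*(m,n) = (T(n,m))*`. -/
noncomputable def revEvolOp {Y : Type*} [NormedAddCommGroup Y] [NormedSpace ℝ Y]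
    (S : ℤ → Y →L[ℝ] Y) (m n : ℤ) : Y →L[ℝ] Y :=
  (List.range (n - m).toNat).foldl (fun A k => A.comp (S (m + k))) (ContinuousLinearMap.id ℝ Y)

/-- A reverse exponential dichotomy on an interval `J ⊆ ℤ` with exponent `β`, bound `M`
and projections `Q n`, for the backward evolution family `S(m,n)` (for `m ≤ n` in `J`):
(i) `S(m,n) Q(n) = Q(m) S(m,n)`; (ii) `S(m,n)` restricted to `R(Q n)` is an isomorphism
onto `R(Q m)`; (iii) `‖S(m,n)(I - Q(n))‖ ≤ M e^{-β(n-m)}`; (iv) the inverse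
`S(n,m) : R(Q m) → R(Q n)` satisfies `‖S(n,m) Q(m)‖ ≤ M e^{-β(n-m)}`. -/
structure RevExpDichotomyOn {Y : Type*} [NormedAddCommGroup Y] [NormedSpace ℝ Y]
    (S : ℤ → Y →L[ℝ] Y) (J : Set ℤ) (β M : ℝ) (Q : ℤ → Y →L[ℝ] Y) : Prop where
  beta_pos : 0 < β
  bound_pos : 0 < M
  isProj : ∀ n ∈ J, (Q n).comp (Q n) = Q n
  commute : ∀ m ∈ J, ∀ n ∈ J, m ≤ n →
    (Q m).comp (revEvolOp S m n) = (revEvolOp S m n).comp (Q n)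
  isoRange : ∀ m ∈ J, ∀ n ∈ J, m ≤ n →
    ⇑(revEvolOp S m n) '' Set.range (Q n) = Set.range (Q m)
  stable : ∀ m ∈ J, ∀ n ∈ J, m ≤ n → ∀ y : Y,
    ‖revEvolOp S m n (y - Q n y)‖ ≤ M * Real.exp (-β * ((n - m : ℤ) : ℝ)) * ‖y‖
  unstable : ∀ m ∈ J, ∀ n ∈ J, m ≤ n → ∀ y w : Y, w ∈ Set.range (Q n) →
    revEvolOp S m n w = Q m y → ‖w‖ ≤ M * Real.exp (-β * ((n - m : ℤ) : ℝ)) * ‖y‖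

/-! Dualising reverses every identity between `T(n,m)` and the projections, and
`‖φ ∘ A‖ ≤ ‖φ‖ ‖A‖` carries the decay of `T(n,m)(I - P m)` over to `T*(m,n)(I - P*(n))`.
For the unstable part, `T(n,m)` maps `R(P m)` bijectively onto `R(P n)`; its inverse
precomposed with `P n` is an operator `U` with `T(n,m) U = P n`, `U T(n,m) = P m`, `P m U = U`
and `‖U‖ ≤ M e^{-β(n-m)}` by item (iv). Then `U*` inverts `T*(m,n)` on `R(P*(m))`, and every
`w ∈ R(P*(n))` with `T*(m,n) w = P*(m) y` equals `U* y`, whence `‖w‖ ≤ M e^{-β(n-m)} ‖y‖`. -/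

section

variable {Y : Type*} [NormedAddCommGroup Y] [NormedSpace ℝ Y]

lemma dualOp_apply (f : Y →L[ℝ] Y) (φ : StrongDual ℝ Y) : dualOp f φ = φ.comp f := rfl

lemma dualOp_comp (f g : Y →L[ℝ] Y) : dualOp (f.comp g) = (dualOp g).comp (dualOp f) := rfl

lemma dualOp_id : dualOp (ContinuousLinearMap.id ℝ Y) = ContinuousLinearMap.id ℝ _ := rfl

lemma List.foldl_comp_dualOp (T : ℤ → Y →L[ℝ] Y) (L : List ℤ) :
    L.foldl (fun A k => A.comp (dualOp (T k))) (ContinuousLinearMap.id ℝ _) =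
      dualOp (L.foldl (fun A k => (T k).comp A) (ContinuousLinearMap.id ℝ Y)) := by
  induction L using List.reverseRecOn with
  | nil => exact dualOp_id.symm
  | append_singleton L k ih => simp only [List.foldl_append, List.foldl_cons, List.foldl_nil, ih,
      dualOp_comp]

lemma revEvolOp_dualOp (T : ℤ → Y →L[ℝ] Y) (m n : ℤ) :
    revEvolOp (fun k => dualOp (T k)) m n = dualOp (evolOp T n m) :=
  List.foldl_comp_dualOp (fun k => T (m + k)) _

lemma exists_inverse_on_range {E P Q : Y →L[ℝ] Y} {C : ℝ} (hP : P.comp P = P)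
    (hcomm : Q.comp E = E.comp P) (himage : E '' range P = range Q)
    (hbound : ∀ x w, w ∈ range P → E w = Q x → ‖w‖ ≤ C * ‖x‖) :
    ∃ U : Y →L[ℝ] Y, E.comp U = Q ∧ U.comp E = P ∧ P.comp U = U ∧ ∀ x, ‖U x‖ ≤ C * ‖x‖ := by
  let R := LinearMap.range (P : Y →ₗ[ℝ] Y)
  let S := LinearMap.range (Q : Y →ₗ[ℝ] Y)
  have hmaps : ∀ w ∈ R, E w ∈ S := fun w hw =>
    (himage ▸ mem_image_of_mem E hw : E w ∈ range Q)
  let f : R →ₗ[ℝ] S := (E : Y →ₗ[ℝ] Y).restrict hmaps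
  have hinj : Function.Injective f := by
    refine (injective_iff_map_eq_zero f).mpr fun w hw => Subtype.ext ?_
    have h0 : E w = Q 0 := by simpa [f] using congrArg Subtype.val hw
    simpa using hbound 0 w w.2 h0
  have hsurj : Function.Surjective f := by
    rintro ⟨q, hq⟩
    obtain ⟨w, hw, hwq⟩ : q ∈ E '' range P := himage ▸ hq
    exact ⟨⟨w, hw⟩, Subtype.ext hwq⟩
  let e := LinearEquiv.ofBijective f ⟨hinj, hsurj⟩
  let U₀ : Y →ₗ[ℝ] Y := R.subtype ∘ₗ e.symm.toLinearMap ∘ₗ (Q : Y →ₗ[ℝ] Y).rangeRestrict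
  have hmem : ∀ x, U₀ x ∈ range P := fun x => (e.symm _).2
  have hEU₀ : ∀ x, E (U₀ x) = Q x := fun x => congrArg Subtype.val (e.apply_symm_apply _)
  have hU₀E : ∀ x, U₀ (E x) = P x := fun x => by
    have hEP : e ⟨P x, mem_range_self x⟩ = (Q : Y →ₗ[ℝ] Y).rangeRestrict (E x) :=
      Subtype.ext (congrArg (· x) hcomm).symm
    change (e.symm ((Q : Y →ₗ[ℝ] Y).rangeRestrict (E x)) : Y) = P x
    rw [← hEP, e.symm_apply_apply]
  have hPU₀ : ∀ x, P (U₀ x) = U₀ x := fun x => by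
    obtain ⟨z, hz⟩ := hmem x
    rw [← hz, ← ContinuousLinearMap.comp_apply, hP]
  have hU₀ : ∀ x, ‖U₀ x‖ ≤ C * ‖x‖ := fun x => hbound x _ (hmem x) (hEU₀ x)
  exact ⟨U₀.mkContinuous C hU₀, ContinuousLinearMap.ext hEU₀, ContinuousLinearMap.ext hU₀E,
    ContinuousLinearMap.ext hPU₀, hU₀⟩

lemma image_dualOp_range_dualOp {E P Q U : Y →L[ℝ] Y} (hcomm : Q.comp E = E.comp P)
    (hEU : E.comp U = Q) (hUE : U.comp E = P) (hPU : P.comp U = U) :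
    dualOp E '' range (dualOp Q) = range (dualOp P) := by
  have hUQ : U.comp Q = U := by rw [← hEU, ← ContinuousLinearMap.comp_assoc, hUE, hPU]
  ext φ
  constructor
  · rintro ⟨_, ⟨ψ, rfl⟩, rfl⟩
    exact ⟨ψ.comp E, by simp only [dualOp_apply, ContinuousLinearMap.comp_assoc, hcomm]⟩
  · rintro ⟨ψ, rfl⟩
    refine ⟨ψ.comp U, ⟨ψ.comp U, ?_⟩, ?_⟩ <;>
      simp only [dualOp_apply, ContinuousLinearMap.comp_assoc, hUQ, hUE]

lemma norm_le_of_dualOp_apply_eq {E P Q U : Y →L[ℝ] Y} {C : ℝ} (hC : 0 ≤ C)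
    (hQ : Q.comp Q = Q) (hEU : E.comp U = Q) (hPU : P.comp U = U)
    (hU : ∀ x, ‖U x‖ ≤ C * ‖x‖) {w y : StrongDual ℝ Y} (hw : w ∈ range (dualOp Q))
    (hwy : dualOp E w = dualOp P y) : ‖w‖ ≤ C * ‖y‖ := by
  obtain ⟨χ, rfl⟩ := hw
  have hw_eq : dualOp Q χ = y.comp U := by
    calc dualOp Q χ = (dualOp Q χ).comp (E.comp U) := by
          rw [hEU, dualOp_apply, ContinuousLinearMap.comp_assoc, hQ]
      _ = (y.comp P).comp U := by
          rw [← ContinuousLinearMap.comp_assoc, ← dualOp_apply E, hwy, dualOp_apply]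
      _ = y.comp U := by rw [ContinuousLinearMap.comp_assoc, hPU]
  rw [hw_eq]
  refine ContinuousLinearMap.opNorm_le_bound _ (by positivity) fun x => ?_
  calc ‖y (U x)‖ ≤ ‖y‖ * ‖U x‖ := y.le_opNorm _
    _ ≤ ‖y‖ * (C * ‖x‖) := by gcongr; exact hU x
    _ = C * ‖y‖ * ‖x‖ := by ring

lemma norm_dualOp_sub_dualOp_le {E P Q : Y →L[ℝ] Y} {C : ℝ} (hC : 0 ≤ C)
    (hcomm : Q.comp E = E.comp P) (hstable : ∀ x, ‖E (x - P x)‖ ≤ C * ‖x‖)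
    (y : StrongDual ℝ Y) : ‖dualOp E (y - dualOp Q y)‖ ≤ C * ‖y‖ := by
  refine ContinuousLinearMap.opNorm_le_bound _ (by positivity) fun x => ?_
  have hx : dualOp E (y - dualOp Q y) x = y (E (x - P x)) := by
    rw [map_sub, map_sub, ← ContinuousLinearMap.comp_apply E P, ← hcomm]
    simp only [sub_apply, dualOp_apply, ContinuousLinearMap.comp_apply, map_sub]
  calc ‖dualOp E (y - dualOp Q y) x‖ ≤ ‖y‖ * ‖E (x - P x)‖ := hx ▸ y.le_opNorm _
    _ ≤ ‖y‖ * (C * ‖x‖) := by gcongr; exact hstable x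
    _ = C * ‖y‖ * ‖x‖ := by ring

end

theorem adjoint_reverse_exponential_dichotomy_general
    (T : ℤ → X →L[ℝ] X) (J : Set ℤ)
    (β M : ℝ) (P : ℤ → X →L[ℝ] X)
    (h : ExpDichotomyOn T J β M P) :
    RevExpDichotomyOn (fun n => dualOp (T n)) J β M (fun n => dualOp (P n)) := by
  have hC : ∀ m n : ℤ, 0 ≤ M * Real.exp (-β * ((n - m : ℤ) : ℝ)) := fun _ _ => by
    have := h.bound_pos
    positivity
  have hinv := fun m (hm : m ∈ J) n (hn : n ∈ J) (hmn : m ≤ n) => exists_inverse_on_range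
    (h.isProj m hm) (h.commute m hm n hn hmn) (h.isoRange m hm n hn hmn) (h.unstable m hm n hn hmn)
  refine ⟨h.beta_pos, h.bound_pos, fun n hn => ?_, fun m hm n hn hmn => ?_,
    fun m hm n hn hmn => ?_, fun m hm n hn hmn => ?_, fun m hm n hn hmn => ?_⟩
  · rw [← dualOp_comp, h.isProj n hn]
  · rw [revEvolOp_dualOp, ← dualOp_comp, ← dualOp_comp, h.commute m hm n hn hmn]
  · obtain ⟨U, hEU, hUE, hPU, -⟩ := hinv m hm n hn hmn
    rw [revEvolOp_dualOp]
    exact image_dualOp_range_dualOp (h.commute m hm n hn hmn) hEU hUE hPU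
  · rw [revEvolOp_dualOp]
    exact norm_dualOp_sub_dualOp_le (hC m n) (h.commute m hm n hn hmn) (h.stable m hm n hn hmn)
  · obtain ⟨U, hEU, -, hPU, hU⟩ := hinv m hm n hn hmn
    simp only [revEvolOp_dualOp]
    exact fun y w hw hwy => norm_le_of_dualOp_apply_eq (hC m n) (h.isProj n hn) hEU hPU hU hw hwy

/-- **The adjoint family of an exponential dichotomy admits a reverse exponential
dichotomy** on the same interval, with the same exponent and bound, and with the adjoint
projections `P*(n) = (P n)*`. -/
theorem adjoint_reverse_exponential_dichotomy
    (T : ℤ → X →L[ℝ] X) (J : Set ℤ) (hJ : J.OrdConnected)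
    (β M : ℝ) (P : ℤ → X →L[ℝ] X)
    (h : ExpDichotomyOn T J β M P) :
    RevExpDichotomyOn (fun n => dualOp (T n)) J β M (fun n => dualOp (P n)) :=
  adjoint_reverse_exponential_dichotomy_general T J β M P h
end

section
/- Let T(n+1,n), n ∈ ℤ, be a family of evolution operators on a Banach space X. The family admits an exponential dichotomy on ℤ if and only if its restrictions to ℤ⁺ and to ℤ⁻ both admit exponential dichotomies and X = S₀ ⊕ U₀, where U₀ = {x₀ ∈ X : there exists a bounded sequence (x_n)_{n ≤ 0} with x_{n+1} = T(n+1,n)x_n for n < 0} and S₀ = {x₀ ∈ X : there exists a bounded sequence (x_n)_{n ≥ 0} with x_{n+1} = T(n+1,n)x_n for n ≥ 0}. When the dichotomies on ℤ⁺ and ℤ⁻ have finite rank, the condition X = S₀ ⊕ U₀ implies the two ranks are equal. -/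
open Set

variable {X : Type*} [NormedAddCommGroup X] [NormedSpace ℝ X] [CompleteSpace X]

/-- `U₀`: the set of initial values of bounded backward solutions. -/
def unstableSet (T : ℤ → X →L[ℝ] X) : Set X :=
  {x₀ | ∃ xs : ℤ → X, (∃ C : ℝ, ∀ n ≤ (0:ℤ), ‖xs n‖ ≤ C) ∧ xs 0 = x₀ ∧
    ∀ n < (0:ℤ), xs (n + 1) = T n (xs n)}

/-- `S₀`: the set of initial values of bounded forward solutions. -/
def stableSet (T : ℤ → X →L[ℝ] X) : Set X :=
  {x₀ | ∃ xs : ℤ → X, (∃ C : ℝ, ∀ n ≥ (0:ℤ), ‖xs n‖ ≤ C) ∧ xs 0 = x₀ ∧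
    ∀ n ≥ (0:ℤ), xs (n + 1) = T n (xs n)}

/-- The direct sum decomposition `X = S₀ ⊕ U₀`: every `x` is uniquely the sum of an
element of `S₀` and an element of `U₀`. -/
def DirectSumDecomp (T : ℤ → X →L[ℝ] X) : Prop :=
  ∀ x : X, ∃! su : X × X, su.1 ∈ stableSet T ∧ su.2 ∈ unstableSet T ∧ x = su.1 + su.2


/-! Bounded solutions identify `S₀` with `ker Pp(0)` and `U₀` with `R(Pm(0))`, so `X = S₀ ⊕ U₀`
says that these two closed subspaces are complementary, and the projection `Q` onto `U₀` along
`S₀` is bounded. On `ℤ⁺` the projection `Pp(0)` may be replaced by any bounded projection with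
the same kernel, transported forward by `T(n,0)` and back by `T(0,n)Pp(n)`; dually, on `ℤ⁻` by
any bounded projection with the same range. Doing both with `Q` gives half-line dichotomies that
agree at `0`, and the dichotomy estimates compose across `0`. The ranks agree because `R(Pp(0))`
and `U₀` are both complements of `S₀`. -/

open Filter Topology

namespace Submodule

variable {R E : Type*} [Ring R] [AddCommGroup E] [Module R E] {p q q' : Submodule R E}

theorem existsUnique_add_iff_isCompl :
    (∀ x : E, ∃! su : E × E, su.1 ∈ p ∧ su.2 ∈ q ∧ x = su.1 + su.2) ↔ IsCompl p q := by
  refine ⟨fun h => ⟨?_, ?_⟩, fun h x => ?_⟩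
  · refine disjoint_def.2 fun x hxp hxq => ?_
    obtain ⟨_, _, huniq⟩ := h x
    have h₁ := huniq (x, 0) ⟨hxp, q.zero_mem, (add_zero x).symm⟩
    have h₂ := huniq (0, x) ⟨p.zero_mem, hxq, (zero_add x).symm⟩
    exact congrArg Prod.fst (h₁.trans h₂.symm)
  · refine codisjoint_iff_le_sup.2 fun x _ => ?_
    obtain ⟨⟨s, u⟩, ⟨hs, hu, rfl⟩, -⟩ := h x
    exact add_mem_sup hs hu
  · obtain ⟨s, u, hsu, huniq⟩ := existsUnique_add_of_isCompl h x
    refine ⟨(s, u), ⟨s.2, u.2, hsu.symm⟩, fun ⟨s', u'⟩ ⟨hs', hu', hx⟩ => ?_⟩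
    obtain ⟨rfl, rfl⟩ := huniq ⟨s', hs'⟩ ⟨u', hu'⟩ hx.symm
    rfl

theorem finrank_eq_of_isCompl (h : IsCompl p q) (h' : IsCompl p q') :
    Module.finrank R q = Module.finrank R q' :=
  ((quotientEquivOfIsCompl p q h).symm.trans (quotientEquivOfIsCompl p q' h')).finrank_eq

end Submodule

section Dichotomy

omit [CompleteSpace X]

variable {T : ℤ → X →L[ℝ] X}

@[simp]
theorem evolOp_self (m : ℤ) : evolOp T m m = ContinuousLinearMap.id ℝ X := by
  unfold evolOp
  rw [sub_self]
  rfl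

theorem evolOp_succ {n m : ℤ} (h : m ≤ n) :
    evolOp T (n + 1) m = (T n).comp (evolOp T n m) := by
  unfold evolOp
  rw [show (n + 1 - m).toNat = (n - m).toNat + 1 by omega, List.range_succ]
  simp only [List.pure_def, List.bind_eq_flatMap, List.flatMap_append, List.flatMap_cons,
    Int.ofNat_toNat, List.flatMap_nil, List.singleton_append, List.foldl_append, List.foldl_cons,
    List.foldl_nil]
  congr 2
  omega

theorem evolOp_succ_self (n : ℤ) : evolOp T (n + 1) n = T n := by
  rw [evolOp_succ le_rfl, evolOp_self, ContinuousLinearMap.comp_id]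

theorem evolOp_comp_evolOp {m k n : ℤ} (hmk : m ≤ k) (hkn : k ≤ n) :
    (evolOp T n k).comp (evolOp T k m) = evolOp T n m := by
  induction n, hkn using Int.leInduction with
  | base => rw [evolOp_self, ContinuousLinearMap.id_comp]
  | succ n hkn ih =>
    rw [evolOp_succ hkn, evolOp_succ (hmk.trans hkn), ContinuousLinearMap.comp_assoc, ih]

theorem evolOp_evolOp_apply {m k n : ℤ} (hmk : m ≤ k) (hkn : k ≤ n) (x : X) :
    evolOp T n k (evolOp T k m x) = evolOp T n m x := by
  rw [← evolOp_comp_evolOp hmk hkn, ContinuousLinearMap.comp_apply]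

theorem evolOp_apply_eq_of_recurrence {xs : ℤ → X} {m n : ℤ} (hmn : m ≤ n)
    (hxs : ∀ k, m ≤ k → k < n → xs (k + 1) = T k (xs k)) : evolOp T n m (xs m) = xs n := by
  induction n, hmn using Int.leInduction with
  | base => rw [evolOp_self, ContinuousLinearMap.id_apply]
  | succ n hmn ih =>
    rw [evolOp_succ hmn, ContinuousLinearMap.comp_apply,
      ih fun k hk hkn => hxs k hk (by omega), hxs n hmn (by omega)]

theorem exp_decay_le_one {β : ℝ} (hβ : 0 ≤ β) {m n : ℤ} (h : m ≤ n) :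
    Real.exp (-β * ((n - m : ℤ) : ℝ)) ≤ 1 := by
  rw [Real.exp_le_one_iff, neg_mul, neg_nonpos]
  exact mul_nonneg hβ (Int.cast_nonneg (sub_nonneg.2 h))

theorem exp_decay_mul_exp_decay (β : ℝ) (m k n : ℤ) :
    Real.exp (-β * ((k - m : ℤ) : ℝ)) * Real.exp (-β * ((n - k : ℤ) : ℝ)) =
      Real.exp (-β * ((n - m : ℤ) : ℝ)) := by
  rw [← Real.exp_add]
  congr 1
  push_cast
  ring

theorem mul_exp_decay_le_mul_exp_decay {β β' M M' : ℝ} (hM₀ : 0 ≤ M) (hM : M ≤ M')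
    (hβ : β' ≤ β) {m n : ℤ} (h : m ≤ n) :
    M * Real.exp (-β * ((n - m : ℤ) : ℝ)) ≤ M' * Real.exp (-β' * ((n - m : ℤ) : ℝ)) := by
  have hnm : (0 : ℝ) ≤ ((n - m : ℤ) : ℝ) := Int.cast_nonneg (sub_nonneg.2 h)
  have hM' : 0 ≤ M' := hM₀.trans hM
  gcongr

theorem mul_exp_decay_le_self {β M : ℝ} (hM : 0 ≤ M) (hβ : 0 ≤ β) {m n : ℤ} (h : m ≤ n) :
    M * Real.exp (-β * ((n - m : ℤ) : ℝ)) ≤ M :=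
  mul_le_of_le_one_right hM (exp_decay_le_one hβ h)

theorem nonpos_of_forall_le_mul_exp {a K β : ℝ} (hβ : 0 < β)
    (h : ∀ n : ℕ, a ≤ K * Real.exp (-β * n)) : a ≤ 0 := by
  have hexp : Real.exp (-β) < 1 := Real.exp_lt_one_iff.2 (neg_lt_zero.2 hβ)
  have hlim : Tendsto (fun n : ℕ => K * Real.exp (-β * n)) atTop (𝓝 0) := by
    simpa [← Real.exp_nat_mul, mul_comm] using
      (tendsto_pow_atTop_nhds_zero_of_lt_one (Real.exp_pos _).le hexp).const_mul K
  exact ge_of_tendsto hlim (Eventually.of_forall h)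

open Classical in
/-- The operator `T(m,n)P(n)`: the inverse of `T(n,m) : R(P m) → R(P n)` after `P n`
(junk value `0` when no such operator exists). -/
noncomputable def backEvolOp (T P : ℤ → X →L[ℝ] X) (m n : ℤ) : X →L[ℝ] X :=
  if h : ∃ B : X →L[ℝ] X, (∀ x, P m (B x) = B x) ∧ ∀ x, evolOp T n m (B x) = P n x then
    h.choose
  else 0

structure DichotomyPair (T P : ℤ → X →L[ℝ] X) (β M : ℝ) (m n : ℤ) : Prop where
  commute : (P n).comp (evolOp T n m) = (evolOp T n m).comp (P m)
  isoRange : ⇑(evolOp T n m) '' range (P m) = range (P n)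
  stable : ∀ x : X, ‖evolOp T n m (x - P m x)‖ ≤ M * Real.exp (-β * ((n - m : ℤ) : ℝ)) * ‖x‖
  unstable : ∀ x w : X, w ∈ range (P m) → evolOp T n m w = P n x →
    ‖w‖ ≤ M * Real.exp (-β * ((n - m : ℤ) : ℝ)) * ‖x‖

namespace ExpDichotomyOn

variable {J : Set ℤ} {β M : ℝ} {P : ℤ → X →L[ℝ] X} {k m n : ℤ}

theorem mono (hd : ExpDichotomyOn T J β M P) {J' : Set ℤ} (hJ : J' ⊆ J) :
    ExpDichotomyOn T J' β M P where
  beta_pos := hd.beta_pos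
  bound_pos := hd.bound_pos
  isProj n hn := hd.isProj n (hJ hn)
  commute m hm n hn := hd.commute m (hJ hm) n (hJ hn)
  isoRange m hm n hn := hd.isoRange m (hJ hm) n (hJ hn)
  stable m hm n hn := hd.stable m (hJ hm) n (hJ hn)
  unstable m hm n hn := hd.unstable m (hJ hm) n (hJ hn)

theorem congr (hd : ExpDichotomyOn T J β M P) {P' : ℤ → X →L[ℝ] X} (hPP' : EqOn P P' J) :
    ExpDichotomyOn T J β M P' where
  beta_pos := hd.beta_pos
  bound_pos := hd.bound_pos
  isProj n hn := hPP' hn ▸ hd.isProj n hn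
  commute m hm n hn := hPP' hm ▸ hPP' hn ▸ hd.commute m hm n hn
  isoRange m hm n hn := hPP' hm ▸ hPP' hn ▸ hd.isoRange m hm n hn
  stable m hm n hn := hPP' hm ▸ hd.stable m hm n hn
  unstable m hm n hn := hPP' hm ▸ hPP' hn ▸ hd.unstable m hm n hn

theorem weaken (hd : ExpDichotomyOn T J β M P) {β' M' : ℝ} (hβ' : 0 < β') (hβ : β' ≤ β)
    (hM : M ≤ M') : ExpDichotomyOn T J β' M' P where
  beta_pos := hβ'
  bound_pos := hd.bound_pos.trans_le hM
  isProj := hd.isProj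
  commute := hd.commute
  isoRange := hd.isoRange
  stable m hm n hn hmn x := (hd.stable m hm n hn hmn x).trans <|
    mul_le_mul_of_nonneg_right (mul_exp_decay_le_mul_exp_decay hd.bound_pos.le hM hβ hmn)
      (norm_nonneg x)
  unstable m hm n hn hmn x w hw hwx := (hd.unstable m hm n hn hmn x w hw hwx).trans <|
    mul_le_mul_of_nonneg_right (mul_exp_decay_le_mul_exp_decay hd.bound_pos.le hM hβ hmn)
      (norm_nonneg x)

theorem dichotomyPair (hd : ExpDichotomyOn T J β M P) (hm : m ∈ J) (hn : n ∈ J) (hmn : m ≤ n) :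
    DichotomyPair T P β M m n :=
  ⟨hd.commute m hm n hn hmn, hd.isoRange m hm n hn hmn, hd.stable m hm n hn hmn,
    hd.unstable m hm n hn hmn⟩

theorem of_dichotomyPair (hβ : 0 < β) (hM : 0 < M) (hproj : ∀ n ∈ J, (P n).comp (P n) = P n)
    (hpair : ∀ m ∈ J, ∀ n ∈ J, m ≤ n → DichotomyPair T P β M m n) :
    ExpDichotomyOn T J β M P :=
  ⟨hβ, hM, hproj, fun m hm n hn hmn => (hpair m hm n hn hmn).commute,
    fun m hm n hn hmn => (hpair m hm n hn hmn).isoRange,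
    fun m hm n hn hmn => (hpair m hm n hn hmn).stable,
    fun m hm n hn hmn => (hpair m hm n hn hmn).unstable⟩

section

variable (hd : ExpDichotomyOn T J β M P)
include hd

theorem bound_mul_exp_nonneg (m n : ℤ) : 0 ≤ M * Real.exp (-β * ((n - m : ℤ) : ℝ)) :=
  mul_nonneg hd.bound_pos.le (Real.exp_pos _).le

theorem le_bound_mul_of_le (hmn : m ≤ n) {a b : ℝ} (hb : 0 ≤ b)
    (h : a ≤ M * Real.exp (-β * ((n - m : ℤ) : ℝ)) * b) : a ≤ M * b :=
  h.trans (mul_le_mul_of_nonneg_right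
    (mul_exp_decay_le_self hd.bound_pos.le hd.beta_pos.le hmn) hb)

theorem isIdempotentElem (hn : n ∈ J) : IsIdempotentElem (P n) :=
  hd.isProj n hn

theorem isCompl_range_ker (hn : n ∈ J) :
    IsCompl (LinearMap.range (P n : X →ₗ[ℝ] X)) (LinearMap.ker (P n : X →ₗ[ℝ] X)) :=
  LinearMap.IsIdempotentElem.isCompl
    (ContinuousLinearMap.IsIdempotentElem.toLinearMap (hd.isIdempotentElem hn))

theorem proj_apply (hn : n ∈ J) (x : X) : P n (P n x) = P n x :=
  DFunLike.congr_fun (hd.isProj n hn) x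

theorem mem_range_iff (hn : n ∈ J) {x : X} :
    x ∈ LinearMap.range (P n : X →ₗ[ℝ] X) ↔ P n x = x :=
  ⟨fun ⟨y, hy⟩ => hy ▸ hd.proj_apply hn y, fun h => ⟨x, h⟩⟩

theorem commute_apply (hm : m ∈ J) (hn : n ∈ J) (hmn : m ≤ n) (x : X) :
    P n (evolOp T n m x) = evolOp T n m (P m x) :=
  DFunLike.congr_fun (hd.commute m hm n hn hmn) x

theorem proj_evolOp_of_proj_eq (hm : m ∈ J) (hn : n ∈ J) (hmn : m ≤ n) {w : X}
    (hw : P m w = w) : P n (evolOp T n m w) = evolOp T n m w := by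
  rw [hd.commute_apply hm hn hmn, hw]

theorem norm_proj_le (hn : n ∈ J) (x : X) : ‖P n x‖ ≤ M * ‖x‖ := by
  simpa using hd.unstable n hn n hn le_rfl x (P n x) ⟨x, rfl⟩ (by simp)

theorem norm_evolOp_le_of_proj_eq_zero (hm : m ∈ J) (hn : n ∈ J) (hmn : m ≤ n) {s : X}
    (hs : P m s = 0) : ‖evolOp T n m s‖ ≤ M * Real.exp (-β * ((n - m : ℤ) : ℝ)) * ‖s‖ := by
  simpa [hs] using hd.stable m hm n hn hmn s

theorem eq_of_evolOp_eq (hm : m ∈ J) (hn : n ∈ J) (hmn : m ≤ n) {w₁ w₂ : X}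
    (h₁ : P m w₁ = w₁) (h₂ : P m w₂ = w₂) (h : evolOp T n m w₁ = evolOp T n m w₂) : w₁ = w₂ := by
  have hw : ‖w₁ - w₂‖ ≤ M * Real.exp (-β * ((n - m : ℤ) : ℝ)) * ‖(0 : X)‖ :=
    hd.unstable m hm n hn hmn 0 _ ⟨w₁ - w₂, by rw [map_sub, h₁, h₂]⟩ (by simp [h])
  rw [norm_zero, mul_zero, norm_le_zero_iff, sub_eq_zero] at hw
  exact hw

theorem exists_backward (hm : m ∈ J) (hn : n ∈ J) (hmn : m ≤ n) :
    ∃ B : X →L[ℝ] X, (∀ x, P m (B x) = B x) ∧ ∀ x, evolOp T n m (B x) = P n x := by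
  let U := LinearMap.range (P m : X →ₗ[ℝ] X)
  let V := LinearMap.range (P n : X →ₗ[ℝ] X)
  let E : U →ₗ[ℝ] V := (evolOp T n m : X →ₗ[ℝ] X).restrict fun w hw =>
    ⟨_, hd.proj_evolOp_of_proj_eq hm hn hmn ((hd.mem_range_iff hm).1 hw)⟩
  have hE : Function.Bijective E := by
    refine ⟨fun a b hab => Subtype.ext (hd.eq_of_evolOp_eq hm hn hmn
      ((hd.mem_range_iff hm).1 a.2) ((hd.mem_range_iff hm).1 b.2)
      (congrArg Subtype.val hab)), fun y => ?_⟩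
    obtain ⟨w, hw, hwy⟩ : (y : X) ∈ evolOp T n m '' range (P m) := by
      rw [hd.isoRange m hm n hn hmn]
      exact y.2
    exact ⟨⟨w, hw⟩, Subtype.ext hwy⟩
  let e := LinearEquiv.ofBijective E hE
  let B : X →ₗ[ℝ] X := U.subtype ∘ₗ e.symm.toLinearMap ∘ₗ (P n : X →ₗ[ℝ] X).rangeRestrict
  have hPB : ∀ x, P m (B x) = B x := fun x => (hd.mem_range_iff hm).1 (Subtype.prop _)
  have hTB : ∀ x, evolOp T n m (B x) = P n x := fun x =>
    congrArg Subtype.val (e.apply_symm_apply ((P n : X →ₗ[ℝ] X).rangeRestrict x))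
  exact ⟨B.mkContinuous M fun x => hd.le_bound_mul_of_le hmn (norm_nonneg x)
    (hd.unstable m hm n hn hmn x (B x) ⟨_, hPB x⟩ (hTB x)), hPB, hTB⟩

section

variable (hm : m ∈ J) (hn : n ∈ J) (hmn : m ≤ n)
include hm hn hmn

theorem proj_backEvolOp (x : X) : P m (backEvolOp T P m n x) = backEvolOp T P m n x := by
  have h := hd.exists_backward hm hn hmn
  rw [backEvolOp, dif_pos h]
  exact h.choose_spec.1 x

theorem evolOp_backEvolOp (x : X) : evolOp T n m (backEvolOp T P m n x) = P n x := by
  have h := hd.exists_backward hm hn hmn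
  rw [backEvolOp, dif_pos h]
  exact h.choose_spec.2 x

theorem norm_backEvolOp_le (x : X) :
    ‖backEvolOp T P m n x‖ ≤ M * Real.exp (-β * ((n - m : ℤ) : ℝ)) * ‖x‖ :=
  hd.unstable m hm n hn hmn x _ ⟨_, hd.proj_backEvolOp hm hn hmn x⟩
    (hd.evolOp_backEvolOp hm hn hmn x)

theorem eq_backEvolOp {w x : X} (hw : P m w = w) (h : evolOp T n m w = P n x) :
    w = backEvolOp T P m n x :=
  hd.eq_of_evolOp_eq hm hn hmn hw (hd.proj_backEvolOp hm hn hmn x)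
    (h.trans (hd.evolOp_backEvolOp hm hn hmn x).symm)

theorem backEvolOp_proj (x : X) : backEvolOp T P m n (P n x) = backEvolOp T P m n x :=
  (hd.eq_backEvolOp hm hn hmn (hd.proj_backEvolOp hm hn hmn x)
    (by rw [hd.evolOp_backEvolOp hm hn hmn, hd.proj_apply hn])).symm

end

theorem backEvolOp_self (hn : n ∈ J) (x : X) : backEvolOp T P n n x = P n x :=
  (hd.eq_backEvolOp hn hn le_rfl (hd.proj_apply hn x) (by simp)).symm

theorem backEvolOp_evolOp (hk : k ∈ J) (hm : m ∈ J) (hn : n ∈ J) (hkm : k ≤ m) (hmn : m ≤ n)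
    (x : X) : backEvolOp T P k n (evolOp T n m x) = backEvolOp T P k m x := by
  refine (hd.eq_backEvolOp hk hn (hkm.trans hmn) (hd.proj_backEvolOp hk hm hkm x) ?_).symm
  rw [← evolOp_evolOp_apply hkm hmn, hd.evolOp_backEvolOp hk hm hkm, hd.commute_apply hm hn hmn]

theorem evolOp_backEvolOp_of_le (hm : m ∈ J) (hn : n ∈ J) (hk : k ∈ J) (hmn : m ≤ n)
    (hnk : n ≤ k) (x : X) : evolOp T n m (backEvolOp T P m k x) = backEvolOp T P n k x := by
  refine hd.eq_backEvolOp hn hk hnk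
    (hd.proj_evolOp_of_proj_eq hm hn hmn (hd.proj_backEvolOp hm hk (hmn.trans hnk) x)) ?_
  rw [evolOp_evolOp_apply hmn hnk, hd.evolOp_backEvolOp hm hk (hmn.trans hnk)]

end

variable {L : ℝ} {P' : ℤ → X →L[ℝ] X} {Q : X →L[ℝ] X}

/-- `hP'P` and `hPP'` say that `P' n` is a projection with the same kernel as `P n`. -/
theorem of_ker_eq (hd : ExpDichotomyOn T J β M P) (hL : 0 ≤ L)
    (hP'P : ∀ n ∈ J, (P' n).comp (P n) = P' n) (hPP' : ∀ n ∈ J, (P n).comp (P' n) = P n)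
    (hbound : ∀ n ∈ J, ∀ x, ‖P' n x‖ ≤ L * ‖x‖)
    (hcomm : ∀ m ∈ J, ∀ n ∈ J, m ≤ n →
      (P' n).comp (evolOp T n m) = (evolOp T n m).comp (P' m)) :
    ExpDichotomyOn T J β (M * (1 + L)) P' := by
  have hproj : ∀ n ∈ J, (P' n).comp (P' n) = P' n := fun n hn =>
    calc (P' n).comp (P' n) = ((P' n).comp (P n)).comp (P' n) := by rw [hP'P n hn]
      _ = P' n := by rw [ContinuousLinearMap.comp_assoc, hPP' n hn, hP'P n hn]
  refine ⟨hd.beta_pos, mul_pos hd.bound_pos (by linarith), hproj, hcomm, ?_, ?_, ?_⟩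
  · intro m hm n hn hmn
    have hrange : ∀ k ∈ J, range (P' k) = P' k '' range (P k) := fun k hk => by
      rw [← range_comp, ← ContinuousLinearMap.coe_comp, hP'P k hk]
    rw [hrange m hm, hrange n hn, image_image, ← hd.isoRange m hm n hn hmn, image_image]
    exact image_congr fun w _ => (DFunLike.congr_fun (hcomm m hm n hn hmn) w).symm
  · intro m hm n hn hmn x
    have hker : P m (x - P' m x) = 0 := by
      rw [map_sub, ← ContinuousLinearMap.comp_apply, hPP' m hm, sub_self]
    calc ‖evolOp T n m (x - P' m x)‖
        ≤ M * Real.exp (-β * ((n - m : ℤ) : ℝ)) * ‖x - P' m x‖ :=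
          hd.norm_evolOp_le_of_proj_eq_zero hm hn hmn hker
      _ ≤ M * Real.exp (-β * ((n - m : ℤ) : ℝ)) * ((1 + L) * ‖x‖) :=
          mul_le_mul_of_nonneg_left (by linarith [norm_sub_le x (P' m x), hbound m hm x])
            (hd.bound_mul_exp_nonneg m n)
      _ = M * (1 + L) * Real.exp (-β * ((n - m : ℤ) : ℝ)) * ‖x‖ := by ring
  · rintro m hm n hn hmn x _ ⟨y, rfl⟩ hwx
    have hPw : evolOp T n m (P m (P' m y)) = P n x := by
      rw [← hd.commute_apply hm hn hmn, hwx, ← ContinuousLinearMap.comp_apply, hPP' n hn]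
    have hw : P' m y = P' m (P m (P' m y)) := by
      rw [← ContinuousLinearMap.comp_apply (P' m), hP'P m hm, ← ContinuousLinearMap.comp_apply,
        hproj m hm]
    calc ‖P' m y‖ = ‖P' m (P m (P' m y))‖ := by rw [← hw]
      _ ≤ L * ‖P m (P' m y)‖ := hbound m hm _
      _ ≤ L * (M * Real.exp (-β * ((n - m : ℤ) : ℝ)) * ‖x‖) :=
          mul_le_mul_of_nonneg_left (hd.unstable m hm n hn hmn x _ ⟨_, rfl⟩ hPw) hL
      _ ≤ M * (1 + L) * Real.exp (-β * ((n - m : ℤ) : ℝ)) * ‖x‖ := by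
          nlinarith [mul_nonneg (hd.bound_mul_exp_nonneg m n) (norm_nonneg x)]

/-- `hPP'` and `hP'P` say that `P' n` is a projection with the same range as `P n`. -/
theorem of_range_eq (hd : ExpDichotomyOn T J β M P) (hL : 0 ≤ L)
    (hPP' : ∀ n ∈ J, (P n).comp (P' n) = P' n) (hP'P : ∀ n ∈ J, (P' n).comp (P n) = P n)
    (hbound : ∀ n ∈ J, ∀ x, ‖P' n x‖ ≤ L * ‖x‖)
    (hcomm : ∀ m ∈ J, ∀ n ∈ J, m ≤ n →
      (P' n).comp (evolOp T n m) = (evolOp T n m).comp (P' m)) :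
    ExpDichotomyOn T J β (M * (1 + L)) P' := by
  have hproj : ∀ n ∈ J, (P' n).comp (P' n) = P' n := fun n hn =>
    calc (P' n).comp (P' n) = (P' n).comp ((P n).comp (P' n)) := by rw [hPP' n hn]
      _ = P' n := by rw [← ContinuousLinearMap.comp_assoc, hP'P n hn, hPP' n hn]
  have hrange : ∀ k ∈ J, range (P' k) = range (P k) := fun k hk => by
    refine Subset.antisymm ?_ ?_
    · rw [← hPP' k hk, ContinuousLinearMap.coe_comp]
      exact range_comp_subset_range _ _
    · rw [← hP'P k hk, ContinuousLinearMap.coe_comp]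
      exact range_comp_subset_range _ _
  refine ⟨hd.beta_pos, mul_pos hd.bound_pos (by linarith), hproj, hcomm, ?_, ?_, ?_⟩
  · intro m hm n hn hmn
    rw [hrange m hm, hrange n hn]
    exact hd.isoRange m hm n hn hmn
  · intro m hm n hn hmn x
    have hsplit : evolOp T n m (x - P' m x) =
        evolOp T n m (x - P m x) - P' n (evolOp T n m (x - P m x)) := by
      rw [← ContinuousLinearMap.comp_apply (P' n), hcomm m hm n hn hmn,
        ContinuousLinearMap.comp_apply, ← map_sub, map_sub (P' m),
        ← ContinuousLinearMap.comp_apply (P' m), hP'P m hm, sub_sub_sub_cancel_right]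
    calc ‖evolOp T n m (x - P' m x)‖ ≤ (1 + L) * ‖evolOp T n m (x - P m x)‖ := by
          rw [hsplit]
          linarith [norm_sub_le (evolOp T n m (x - P m x)) (P' n (evolOp T n m (x - P m x))),
            hbound n hn (evolOp T n m (x - P m x))]
      _ ≤ (1 + L) * (M * Real.exp (-β * ((n - m : ℤ) : ℝ)) * ‖x‖) :=
          mul_le_mul_of_nonneg_left (hd.stable m hm n hn hmn x) (by linarith)
      _ = M * (1 + L) * Real.exp (-β * ((n - m : ℤ) : ℝ)) * ‖x‖ := by ring
  · intro m hm n hn hmn x w hw hwx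
    have hwx' : evolOp T n m w = P n (P' n x) := by
      rw [hwx, ← ContinuousLinearMap.comp_apply, hPP' n hn]
    calc ‖w‖ ≤ M * Real.exp (-β * ((n - m : ℤ) : ℝ)) * ‖P' n x‖ :=
          hd.unstable m hm n hn hmn _ w (hrange m hm ▸ hw) hwx'
      _ ≤ M * Real.exp (-β * ((n - m : ℤ) : ℝ)) * (L * ‖x‖) :=
          mul_le_mul_of_nonneg_left (hbound n hn x) (hd.bound_mul_exp_nonneg m n)
      _ ≤ M * (1 + L) * Real.exp (-β * ((n - m : ℤ) : ℝ)) * ‖x‖ := by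
          nlinarith [mul_nonneg (hd.bound_mul_exp_nonneg m n) (norm_nonneg x)]


theorem exists_proj_eq_of_ker_eq (hd : ExpDichotomyOn T (Ici k) β M P)
    (hQP : Q.comp (P k) = Q) (hPQ : (P k).comp Q = P k) :
    ∃ M' P', ExpDichotomyOn T (Ici k) β M' P' ∧ P' k = Q := by
  have hk : k ∈ Ici k := self_mem_Ici
  have hM := hd.bound_pos.le
  let P' n := (evolOp T n k).comp (Q.comp (backEvolOp T P k n))
  refine ⟨_, P', hd.of_ker_eq (L := M + M * (‖Q - P k‖ * M))
    (add_nonneg hM (mul_nonneg hM (mul_nonneg (norm_nonneg _) hM))) ?_ ?_ ?_ ?_, ?_⟩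
  · intro n hn
    ext x
    simp only [P', ContinuousLinearMap.comp_apply, hd.backEvolOp_proj hk hn hn]
  · intro n hn
    ext x
    simp only [P', ContinuousLinearMap.comp_apply]
    rw [hd.commute_apply hk hn hn, ← ContinuousLinearMap.comp_apply (P k), hPQ,
      hd.proj_backEvolOp hk hn hn, hd.evolOp_backEvolOp hk hn hn]
  · intro n hn x
    set y := backEvolOp T P k n x
    have hsplit : P' n x = P n x + evolOp T n k ((Q - P k) y) := by
      rw [sub_apply, map_sub, hd.proj_backEvolOp hk hn hn,
        hd.evolOp_backEvolOp hk hn hn, add_sub_cancel]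
      rfl
    have hker : P k ((Q - P k) y) = 0 := by
      rw [sub_apply, map_sub, ← ContinuousLinearMap.comp_apply (P k), hPQ,
        hd.proj_apply hk, sub_self]
    have h₁ := hd.le_bound_mul_of_le hn (norm_nonneg _)
      (hd.norm_evolOp_le_of_proj_eq_zero hk hn hn hker)
    have h₂ := hd.le_bound_mul_of_le hn (norm_nonneg _) (hd.norm_backEvolOp_le hk hn hn x)
    calc ‖P' n x‖ ≤ ‖P n x‖ + ‖evolOp T n k ((Q - P k) y)‖ := hsplit ▸ norm_add_le _ _
      _ ≤ M * ‖x‖ + M * (‖Q - P k‖ * ‖y‖) := add_le_add (hd.norm_proj_le hn x)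
          (h₁.trans (mul_le_mul_of_nonneg_left ((Q - P k).le_opNorm y) hM))
      _ ≤ M * ‖x‖ + M * (‖Q - P k‖ * (M * ‖x‖)) := by gcongr
      _ = (M + M * (‖Q - P k‖ * M)) * ‖x‖ := by ring
  · intro m hm n hn hmn
    ext x
    simp only [P', ContinuousLinearMap.comp_apply]
    rw [hd.backEvolOp_evolOp hk hm hn hm hmn, evolOp_evolOp_apply hm hmn]
  · ext x
    simp only [P', evolOp_self, ContinuousLinearMap.comp_apply, ContinuousLinearMap.id_apply,
      hd.backEvolOp_self hk]
    rw [← ContinuousLinearMap.comp_apply Q, hQP]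

theorem exists_proj_eq_of_range_eq (hd : ExpDichotomyOn T (Iic k) β M P)
    (hPQ : (P k).comp Q = Q) (hQP : Q.comp (P k) = P k) :
    ∃ M' P', ExpDichotomyOn T (Iic k) β M' P' ∧ P' k = Q := by
  have hk : k ∈ Iic k := self_mem_Iic
  have hM := hd.bound_pos.le
  have hback : ∀ n ∈ Iic k, ∀ x, backEvolOp T P n k (evolOp T k n x) = P n x := fun n hn x => by
    rw [hd.backEvolOp_evolOp hn hn hk le_rfl hn, hd.backEvolOp_self hn]
  let P' n := (backEvolOp T P n k).comp (Q.comp (evolOp T k n))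
  refine ⟨_, P', hd.of_range_eq (L := M + M * (‖Q - P k‖ * M))
    (add_nonneg hM (mul_nonneg hM (mul_nonneg (norm_nonneg _) hM))) ?_ ?_ ?_ ?_, ?_⟩
  · intro n hn
    ext x
    exact hd.proj_backEvolOp hn hk hn _
  · intro n hn
    ext x
    simp only [P', ContinuousLinearMap.comp_apply]
    rw [← hd.commute_apply hn hk hn, ← ContinuousLinearMap.comp_apply Q, hQP,
      hd.backEvolOp_proj hn hk hn, hback n hn]
  · intro n hn x
    set y := evolOp T k n (x - P n x)
    have hsplit : P' n x = P n x + backEvolOp T P n k ((Q - P k) y) := by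
      have hy : (Q - P k) y = Q (evolOp T k n x) - P k (evolOp T k n x) := by
        have hQ : Q (P k (evolOp T k n x)) = P k (evolOp T k n x) := DFunLike.congr_fun hQP _
        simp only [y, sub_apply, map_sub, ← hd.commute_apply hn hk hn, hQ, hd.proj_apply hk]
        abel
      rw [hy, map_sub, hd.backEvolOp_proj hn hk hn, hback n hn, add_sub_cancel]
      rfl
    have h₁ := hd.le_bound_mul_of_le hn (norm_nonneg _)
      (hd.norm_backEvolOp_le hn hk hn ((Q - P k) y))
    have h₂ := hd.le_bound_mul_of_le hn (norm_nonneg _) (hd.stable n hn k hk hn x)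
    calc ‖P' n x‖ ≤ ‖P n x‖ + ‖backEvolOp T P n k ((Q - P k) y)‖ := hsplit ▸ norm_add_le _ _
      _ ≤ M * ‖x‖ + M * (‖Q - P k‖ * ‖y‖) := add_le_add (hd.norm_proj_le hn x)
          (h₁.trans (mul_le_mul_of_nonneg_left ((Q - P k).le_opNorm y) hM))
      _ ≤ M * ‖x‖ + M * (‖Q - P k‖ * (M * ‖x‖)) := by gcongr
      _ = (M + M * (‖Q - P k‖ * M)) * ‖x‖ := by ring
  · intro m hm n hn hmn
    ext x
    simp only [P', ContinuousLinearMap.comp_apply]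
    rw [evolOp_evolOp_apply hmn hn, hd.evolOp_backEvolOp_of_le hm hn hk hmn hn]
  · ext x
    simp only [P', evolOp_self, ContinuousLinearMap.comp_apply, ContinuousLinearMap.id_apply,
      hd.backEvolOp_self hk]
    rw [← ContinuousLinearMap.comp_apply (P k), hPQ]

end ExpDichotomyOn

namespace DichotomyPair

variable {P : ℤ → X →L[ℝ] X} {β M M₁ M₂ : ℝ} {k m n : ℤ}

theorem mono_bound (h : DichotomyPair T P β M m n) (hmn : m ≤ n) (hM₀ : 0 ≤ M) {M' : ℝ}
    (hM : M ≤ M') : DichotomyPair T P β M' m n where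
  commute := h.commute
  isoRange := h.isoRange
  stable x := (h.stable x).trans <| mul_le_mul_of_nonneg_right
    (mul_exp_decay_le_mul_exp_decay hM₀ hM le_rfl hmn) (norm_nonneg x)
  unstable x w hw hwx := (h.unstable x w hw hwx).trans <| mul_le_mul_of_nonneg_right
    (mul_exp_decay_le_mul_exp_decay hM₀ hM le_rfl hmn) (norm_nonneg x)

theorem trans (h₁ : DichotomyPair T P β M₁ m k) (h₂ : DichotomyPair T P β M₂ k n)
    (hmk : m ≤ k) (hkn : k ≤ n) (hM₁ : 0 ≤ M₁) (hM₂ : 0 ≤ M₂)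
    (hPm : (P m).comp (P m) = P m) (hPk : (P k).comp (P k) = P k) :
    DichotomyPair T P β (M₁ * M₂) m n where
  commute := by
    rw [← evolOp_comp_evolOp hmk hkn, ← ContinuousLinearMap.comp_assoc, h₂.commute,
      ContinuousLinearMap.comp_assoc, h₁.commute, ContinuousLinearMap.comp_assoc]
  isoRange := by
    rw [← evolOp_comp_evolOp hmk hkn, ContinuousLinearMap.coe_comp, image_comp, h₁.isoRange,
      h₂.isoRange]
  stable x := by
    set y := evolOp T k m (x - P m x)
    have hy : P k y = 0 := by
      rw [← ContinuousLinearMap.comp_apply, h₁.commute, ContinuousLinearMap.comp_apply, map_sub,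
        ← ContinuousLinearMap.comp_apply (P m), hPm, sub_self, map_zero]
    calc ‖evolOp T n m (x - P m x)‖ = ‖evolOp T n k (y - P k y)‖ := by
          rw [hy, sub_zero, evolOp_evolOp_apply hmk hkn]
      _ ≤ M₂ * Real.exp (-β * ((n - k : ℤ) : ℝ)) * ‖y‖ := h₂.stable y
      _ ≤ M₂ * Real.exp (-β * ((n - k : ℤ) : ℝ)) *
            (M₁ * Real.exp (-β * ((k - m : ℤ) : ℝ)) * ‖x‖) := by
          gcongr
          exact h₁.stable x
      _ = M₁ * M₂ * Real.exp (-β * ((n - m : ℤ) : ℝ)) * ‖x‖ := by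
          rw [← exp_decay_mul_exp_decay β m k n]
          ring
  unstable x w hw hwx := by
    set v := evolOp T k m w
    have hv : v ∈ range (P k) := h₁.isoRange ▸ mem_image_of_mem _ hw
    have hPv : P k v = v := by
      obtain ⟨u, hu⟩ := hv
      rw [← hu, ← ContinuousLinearMap.comp_apply, hPk]
    calc ‖w‖ ≤ M₁ * Real.exp (-β * ((k - m : ℤ) : ℝ)) * ‖v‖ := h₁.unstable v w hw hPv.symm
      _ ≤ M₁ * Real.exp (-β * ((k - m : ℤ) : ℝ)) *
            (M₂ * Real.exp (-β * ((n - k : ℤ) : ℝ)) * ‖x‖) := by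
          gcongr
          exact h₂.unstable x v hv (by rw [evolOp_evolOp_apply hmk hkn, hwx])
      _ = M₁ * M₂ * Real.exp (-β * ((n - m : ℤ) : ℝ)) * ‖x‖ := by
          rw [← exp_decay_mul_exp_decay β m k n]
          ring

end DichotomyPair

namespace ExpDichotomyOn

variable {β M : ℝ} {P : ℤ → X →L[ℝ] X}

theorem glue {k : ℤ} (h₁ : ExpDichotomyOn T (Iic k) β M P)
    (h₂ : ExpDichotomyOn T (Ici k) β M P) (hM : 1 ≤ M) : ExpDichotomyOn T univ β (M * M) P := by
  have hM₀ := h₁.bound_pos.le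
  have hMM : M ≤ M * M := le_mul_of_one_le_left hM₀ hM
  refine .of_dichotomyPair h₁.beta_pos (by nlinarith) (fun n _ => ?_) fun m _ n _ hmn => ?_
  · rcases le_total n k with hn | hn
    exacts [h₁.isProj n hn, h₂.isProj n hn]
  rcases le_total n k with hnk | hkn
  · exact (h₁.dichotomyPair (hmn.trans hnk) hnk hmn).mono_bound hmn hM₀ hMM
  rcases le_total k m with hkm | hmk
  · exact (h₂.dichotomyPair hkm (hkm.trans hmn) hmn).mono_bound hmn hM₀ hMM
  exact (h₁.dichotomyPair hmk self_mem_Iic hmk).trans (h₂.dichotomyPair self_mem_Ici hkn hkn)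
    hmk hkn hM₀ hM₀ (h₁.isProj m hmk) (h₁.isProj k self_mem_Iic)

theorem stableSet_eq_ker (hd : ExpDichotomyOn T (Ici 0) β M P) :
    stableSet T = (LinearMap.ker (P 0 : X →ₗ[ℝ] X) : Set X) := by
  have h0 : (0 : ℤ) ∈ Ici 0 := self_mem_Ici
  ext x
  simp only [SetLike.mem_coe, LinearMap.mem_ker, ContinuousLinearMap.coe_coe]
  constructor
  · rintro ⟨xs, ⟨C, hC⟩, rfl, hxs⟩
    refine norm_le_zero_iff.1 (nonpos_of_forall_le_mul_exp (K := M * C) hd.beta_pos fun n => ?_)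
    have hn : (n : ℤ) ∈ Ici 0 := Int.natCast_nonneg n
    have horbit : evolOp T n 0 (xs 0) = xs n :=
      evolOp_apply_eq_of_recurrence hn fun k hk _ => hxs k hk
    calc ‖P 0 (xs 0)‖ ≤ M * Real.exp (-β * ((n - 0 : ℤ) : ℝ)) * ‖xs n‖ :=
          hd.unstable 0 h0 n hn hn (xs n) _ ⟨_, rfl⟩ (by rw [← hd.commute_apply h0 hn hn, horbit])
      _ ≤ M * Real.exp (-β * ((n - 0 : ℤ) : ℝ)) * C :=
          mul_le_mul_of_nonneg_left (hC n hn) (hd.bound_mul_exp_nonneg 0 n)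
      _ = M * C * Real.exp (-β * n) := by rw [sub_zero, Int.cast_natCast]; ring
  · intro hx
    refine ⟨fun n => evolOp T n 0 x, ⟨M * ‖x‖, fun n hn => ?_⟩, by simp, fun n hn => ?_⟩
    · exact hd.le_bound_mul_of_le hn (norm_nonneg x) (by simpa [hx] using hd.stable 0 h0 n hn hn x)
    · change evolOp T (n + 1) 0 x = T n (evolOp T n 0 x)
      rw [evolOp_succ hn, ContinuousLinearMap.comp_apply]

theorem unstableSet_eq_range (hd : ExpDichotomyOn T (Iic 0) β M P) :
    unstableSet T = (LinearMap.range (P 0 : X →ₗ[ℝ] X) : Set X) := by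
  have h0 : (0 : ℤ) ∈ Iic 0 := self_mem_Iic
  ext x
  rw [SetLike.mem_coe, hd.mem_range_iff h0]
  constructor
  · rintro ⟨xs, ⟨C, hC⟩, rfl, hxs⟩
    rw [← sub_eq_zero, ← norm_le_zero_iff, norm_sub_rev]
    refine nonpos_of_forall_le_mul_exp (K := M * C) hd.beta_pos fun n => ?_
    have hn : (-n : ℤ) ∈ Iic 0 := by simp
    have horbit : evolOp T 0 (-n) (xs (-n)) = xs 0 :=
      evolOp_apply_eq_of_recurrence hn fun k _ hk => hxs k hk
    have hsplit : xs 0 - P 0 (xs 0) = evolOp T 0 (-n) (xs (-n) - P (-n) (xs (-n))) := by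
      rw [map_sub, ← hd.commute_apply hn h0 hn, horbit]
    calc ‖xs 0 - P 0 (xs 0)‖ ≤ M * Real.exp (-β * ((0 - -n : ℤ) : ℝ)) * ‖xs (-n)‖ :=
          hsplit ▸ hd.stable (-n) hn 0 h0 hn (xs (-n))
      _ ≤ M * Real.exp (-β * ((0 - -n : ℤ) : ℝ)) * C :=
          mul_le_mul_of_nonneg_left (hC _ hn) (hd.bound_mul_exp_nonneg _ 0)
      _ = M * C * Real.exp (-β * n) := by rw [sub_neg_eq_add, zero_add, Int.cast_natCast]; ring
  · intro hx
    refine ⟨fun n => backEvolOp T P n 0 x, ⟨M * ‖x‖, fun n hn => ?_⟩, ?_, fun n hn => ?_⟩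
    · exact hd.le_bound_mul_of_le hn (norm_nonneg x) (hd.norm_backEvolOp_le hn h0 hn x)
    · change backEvolOp T P 0 0 x = x
      rw [hd.backEvolOp_self h0, hx]
    · have hn' : n + 1 ∈ Iic 0 := Int.add_one_le_iff.2 hn
      change backEvolOp T P (n + 1) 0 x = T n (backEvolOp T P n 0 x)
      rw [← evolOp_succ_self (T := T), hd.evolOp_backEvolOp_of_le hn.le hn' h0 (by omega) hn']

theorem directSumDecomp_iff_isCompl {βm Mm : ℝ} {Pm : ℤ → X →L[ℝ] X}
    (hp : ExpDichotomyOn T (Ici 0) β M P) (hm : ExpDichotomyOn T (Iic 0) βm Mm Pm) :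
    DirectSumDecomp T ↔
      IsCompl (LinearMap.ker (P 0 : X →ₗ[ℝ] X)) (LinearMap.range (Pm 0 : X →ₗ[ℝ] X)) := by
  rw [DirectSumDecomp, hp.stableSet_eq_ker, hm.unstableSet_eq_range]
  exact Submodule.existsUnique_add_iff_isCompl

end ExpDichotomyOn

end Dichotomy

theorem exists_proj_of_isCompl {A B : X →L[ℝ] X} (hA : IsIdempotentElem A)
    (hB : IsIdempotentElem B)
    (h : IsCompl (LinearMap.ker (A : X →ₗ[ℝ] X)) (LinearMap.range (B : X →ₗ[ℝ] X))) :
    ∃ Q : X →L[ℝ] X, Q.comp A = Q ∧ A.comp Q = A ∧ B.comp Q = Q ∧ Q.comp B = B := by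
  have htop := Submodule.IsCompl.isTopCompl_of_isClosed h.symm
    (ContinuousLinearMap.IsIdempotentElem.isClosed_range hB) A.isClosed_ker
  have hA' : ∀ x, A (A x) = A x := fun x => DFunLike.congr_fun hA x
  have hB' : ∀ x, B (B x) = B x := fun x => DFunLike.congr_fun hB x
  refine ⟨Submodule.projectionL _ _ htop, ?_, ?_, ?_, ?_⟩ <;> ext x <;>
    simp only [ContinuousLinearMap.comp_apply]
  · rw [← sub_eq_zero, ← map_sub, Submodule.projectionL_apply_eq_zero_iff]
    simp [hA']
  · rw [← sub_eq_zero, ← map_sub, ← neg_sub, map_neg, neg_eq_zero,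
      ← Submodule.projectionL_eq_self_sub_projectionL htop]
    exact Submodule.projectionL_apply_mem htop.symm x
  · obtain ⟨y, hy⟩ := Submodule.projectionL_apply_mem htop x
    rw [← hy]
    exact hB' y
  · exact (Submodule.projectionL_eq_self_iff htop _).2 ⟨x, rfl⟩

theorem ExpDichotomyOn.exists_univ_of_isCompl {T : ℤ → X →L[ℝ] X} {βp Mp βm Mm : ℝ}
    {Pp Pm : ℤ → X →L[ℝ] X} (hp : ExpDichotomyOn T (Ici 0) βp Mp Pp)
    (hm : ExpDichotomyOn T (Iic 0) βm Mm Pm)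
    (h : IsCompl (LinearMap.ker (Pp 0 : X →ₗ[ℝ] X)) (LinearMap.range (Pm 0 : X →ₗ[ℝ] X))) :
    ∃ (β M : ℝ) (P : ℤ → X →L[ℝ] X), ExpDichotomyOn T univ β M P := by
  obtain ⟨Q, hQPp, hPpQ, hPmQ, hQPm⟩ := exists_proj_of_isCompl
    (hp.isIdempotentElem self_mem_Ici) (hm.isIdempotentElem self_mem_Iic) h
  obtain ⟨Mp', Pp', hp', hPp'⟩ := hp.exists_proj_eq_of_ker_eq hQPp hPpQ
  obtain ⟨Mm', Pm', hm', hPm'⟩ := hm.exists_proj_eq_of_range_eq hPmQ hQPm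
  have hβ : 0 < min βp βm := lt_min hp.beta_pos hm.beta_pos
  classical
  refine ⟨min βp βm, max 1 (max Mp' Mm') * max 1 (max Mp' Mm'),
    fun n => if 0 ≤ n then Pp' n else Pm' n, .glue (k := 0) ?_ ?_ (le_max_left _ _)⟩
  · refine (hm'.weaken hβ (min_le_right _ _) ((le_max_right _ _).trans (le_max_right _ _))).congr
      fun n hn => ?_
    split_ifs with h0
    · rw [le_antisymm hn h0, hPp', hPm']
    · rfl
  · exact (hp'.weaken hβ (min_le_left _ _) ((le_max_left _ _).trans (le_max_right _ _))).congr
      fun n hn => (if_pos hn).symm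

/-- **Gluing of exponential dichotomies.**  The family `T(n+1,n)` admits an exponential
dichotomy on `ℤ` if and only if its restrictions to `ℤ⁺` and `ℤ⁻` both admit exponential
dichotomies and `X = S₀ ⊕ U₀`.  Moreover, when the dichotomies on `ℤ⁺` and `ℤ⁻` have
finite ranks, the condition `X = S₀ ⊕ U₀` implies that the two ranks are equal. -/
theorem dichotomy_on_Z_iff_halfline_dichotomies (T : ℤ → X →L[ℝ] X) :
    ((∃ (β M : ℝ) (P : ℤ → X →L[ℝ] X), ExpDichotomyOn T Set.univ β M P) ↔
      ((∃ (β M : ℝ) (P : ℤ → X →L[ℝ] X), ExpDichotomyOn T (Set.Ici 0) β M P)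
        ∧ (∃ (β M : ℝ) (P : ℤ → X →L[ℝ] X), ExpDichotomyOn T (Set.Iic 0) β M P)
        ∧ DirectSumDecomp T))
    ∧ ∀ (βp Mp βm Mm : ℝ) (Pp Pm : ℤ → X →L[ℝ] X) (kp km : ℕ),
        ExpDichotomyOn T (Set.Ici 0) βp Mp Pp → DichotomyRankOn Pp (Set.Ici 0) kp →
        ExpDichotomyOn T (Set.Iic 0) βm Mm Pm → DichotomyRankOn Pm (Set.Iic 0) km →
        DirectSumDecomp T → kp = km := by
  refine ⟨⟨fun ⟨β, M, P, hd⟩ => ?_, fun ⟨⟨βp, Mp, Pp, hp⟩, ⟨βm, Mm, Pm, hm⟩, hdec⟩ =>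
    hp.exists_univ_of_isCompl hm ((hp.directSumDecomp_iff_isCompl hm).1 hdec)⟩, ?_⟩
  · have hp := hd.mono (subset_univ (Ici 0))
    have hm := hd.mono (subset_univ (Iic 0))
    exact ⟨⟨β, M, P, hp⟩, ⟨β, M, P, hm⟩, (hp.directSumDecomp_iff_isCompl hm).2
      (hd.isCompl_range_ker (mem_univ 0)).symm⟩
  · intro βp Mp βm Mm Pp Pm kp km hp hkp hm hkm hdec
    rw [← (hkp 0 self_mem_Ici).2, ← (hkm 0 self_mem_Iic).2]
    exact Submodule.finrank_eq_of_isCompl (hp.isCompl_range_ker self_mem_Ici).symm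
      ((hp.directSumDecomp_iff_isCompl hm).1 hdec)
end

section
/- (Convergence to a solution of the asymptotic equation.) Let X be a complex Banach space and T ∈ L(X). Suppose there are ρ > 0 and 0 < δ₁ < δ, 0 < δ̃₁ < δ̃ such that ∅ ≠ σ(T) ∩ {ρ − δ ≤ |z| ≤ ρ + δ̃} ⊆ {ρ − δ₁ < |z| < ρ + δ̃₁}, and suppose T (as a constant family) admits a shifted exponential dichotomy with gap [ρ + δ̃₁, ρ + δ*] for some δ* > δ̃. Let Q_{ρ−δ} and Q_{ρ+δ̃} be the Riesz spectral projections onto the spectral parts in {|z| < ρ − δ} and {|z| < ρ + δ̃} respectively, and set T_ρ = [Q_{ρ+δ̃} − Q_{ρ−δ}] T [Q_{ρ+δ̃} − Q_{ρ−δ}]. Let u(n), n ∈ ℤ⁺, satisfy u(n+1) = (T + Σ(n)) u(n) with ‖Σ(n)‖ = O(rⁿ) for some r < 1 with (ρ + δ̃) r < ρ − δ, and assume ρ − δ₁ ≤ lim_{n→+∞} ‖u(n)‖_X^{1/n} ≤ ρ + δ̃₁. Then there exists a nowhere-vanishing sequence u_∞(n), n ∈ ℤ⁺, with values in R(Q_{ρ+δ̃}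 − Q_{ρ−δ}), satisfying u_∞(n+1) = T_ρ u_∞(n) for all n, such that ‖u(n) − u_∞(n)‖_X = O((ρ − δ)ⁿ) as n → +∞. -/
open Set Filter

variable {X : Type*} [NormedAddCommGroup X] [NormedSpace ℂ X] [CompleteSpace X]

/-- `P` is the Riesz spectral projection of `T` associated with the partition of
`σ(T)` into `σ(T) ∩ {|z| > ρ}` and `σ(T) ∩ {|z| < ρ}`. -/
def IsRieszProjection (T P : X →L[ℂ] X) (ρ : ℝ) : Prop :=
  P.comp P = P ∧ P.comp T = T.comp P ∧
  (∃ T' : ↥(LinearMap.range (P : X →ₗ[ℂ] X)) →L[ℂ] ↥(LinearMap.range (P : X →ₗ[ℂ] X)),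
      (∀ x : ↥(LinearMap.range (P : X →ₗ[ℂ] X)), (T' x : X) = T (x : X)) ∧
      spectrum ℂ T' = {z ∈ spectrum ℂ T | ρ < ‖z‖}) ∧
  (∃ T'' : ↥(LinearMap.range ((ContinuousLinearMap.id ℂ X - P : X →L[ℂ] X) : X →ₗ[ℂ] X)) →L[ℂ]
      ↥(LinearMap.range ((ContinuousLinearMap.id ℂ X - P : X →L[ℂ] X) : X →ₗ[ℂ] X)),
      (∀ x : ↥(LinearMap.range ((ContinuousLinearMap.id ℂ X - P : X →L[ℂ] X) : X →ₗ[ℂ] X)), (T'' x : X) = T (x : X)) ∧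
      spectrum ℂ T'' = {z ∈ spectrum ℂ T | ‖z‖ < ρ})

/-- A constant family `T` admits a shifted exponential dichotomy with gap `[l₁,l₂]`,
bound `K` and projection `P` (`Q = I − P`): `P` commutes with `T`, `T` restricted to
`R(P)` is an isomorphism of `R(P)`, `‖Tⁿ(I − P)‖ ≤ K l₁ⁿ` for `n ≥ 0` and
`‖Tⁿ P‖ ≤ K l₂ⁿ` for `n ≤ 0` (via the inverse on `R(P)`). -/
def ConstShiftedDichotomy (T : X →L[ℂ] X) (l₁ l₂ K : ℝ) (P : X →L[ℂ] X) : Prop :=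
  0 < l₁ ∧ l₁ ≤ l₂ ∧ 0 < K ∧
  P.comp P = P ∧ P.comp T = T.comp P ∧
  (⇑T '' Set.range P = Set.range P) ∧
  (∀ (n : ℕ) (x : X), ‖(T ^ n) (x - P x)‖ ≤ K * l₁ ^ n * ‖x‖) ∧
  (∀ (n : ℕ) (x w : X), w ∈ Set.range P → (T ^ n) w = P x →
    ‖w‖ ≤ K * l₂ ^ (-(n : ℤ)) * ‖x‖)

open Asymptotics Topology

/-!
Pick `G ∈ (ρ + δ̃₁, ρ + δ̃)`; then `u(n) = O(Gⁿ)` and the forcing `Σ(n) u(n)` is `O((rG)ⁿ)`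
with `rG < ρ - δ`. Write `Pd = P_{ρ-δ}` and `Pdt = P_{ρ+δ̃}`. On `R(I - Pd)` the powers of `T`
decay faster than `(ρ - δ)ⁿ`, so by variation of constants that component of `u` is
`O((ρ - δ)ⁿ)`. On `R(Pd)` the operator `T` is invertible and `‖T⁻ⁿ‖` decays faster than
`(ρ - δ)⁻ⁿ`, so the tail series `s(n) = ∑_{j ≥ 0} T^{-(j+1)} Pd Σ(n+j) u(n+j)` converges, is
`O((rG)ⁿ)`, and makes `v = Pd u + s` an exact orbit of `T`. The `Pdt`-part of `v` is an orbit
of growth `O(Gⁿ)` in a subspace where `T` expands faster than `(ρ + δ̃)ⁿ`, so it vanishes and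
`v` lies in `R(Pd - Pdt)`. If `v` vanished once it would vanish from then on, and then
`u = O((ρ - δ)ⁿ)` would contradict `lim ‖u(n)‖^{1/n} ≥ ρ - δ₁ > ρ - δ`.
-/

section RootTest

variable {E : Type*} [SeminormedAddCommGroup E]

theorem isBigO_pow_of_eventually_rpow_inv_lt {f : ℕ → E} {θ : ℝ}
    (h : ∀ᶠ n in atTop, ‖f n‖ ^ (n : ℝ)⁻¹ < θ) : f =O[atTop] (θ ^ ·) := by
  refine IsBigO.of_bound 1 ?_
  filter_upwards [h, eventually_ne_atTop 0] with n hn hn0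
  calc ‖f n‖ = (‖f n‖ ^ (n : ℝ)⁻¹) ^ n := (Real.rpow_inv_natCast_pow (norm_nonneg _) hn0).symm
    _ ≤ θ ^ n := pow_le_pow_left₀ (by positivity) hn.le n
    _ ≤ 1 * ‖θ ^ n‖ := (one_mul ‖θ ^ n‖).symm ▸ Real.le_norm_self _

theorem le_of_tendsto_rpow_inv_of_isBigO {f : ℕ → E} {L β : ℝ} (hβ : 0 < β)
    (hL : Tendsto (fun n => ‖f n‖ ^ (n : ℝ)⁻¹) atTop (𝓝 L)) (hf : f =O[atTop] (β ^ ·)) :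
    L ≤ β := by
  obtain ⟨C, hC, hfC⟩ := hf.exists_pos
  have hroot : Tendsto (fun n : ℕ => C ^ (n : ℝ)⁻¹ * β) atTop (𝓝 β) := by
    have h0 : Tendsto (fun n : ℕ => C ^ (n : ℝ)⁻¹) atTop (𝓝 (C ^ (0 : ℝ))) :=
      (Real.continuousAt_const_rpow hC.ne').tendsto.comp
        (tendsto_inv_atTop_zero.comp tendsto_natCast_atTop_atTop)
    simpa using h0.mul_const β
  refine le_of_tendsto_of_tendsto hL hroot ?_
  filter_upwards [hfC.bound, eventually_ne_atTop 0] with n hn hn0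
  rw [norm_pow, Real.norm_of_nonneg hβ.le] at hn
  calc ‖f n‖ ^ (n : ℝ)⁻¹ ≤ (C * β ^ n) ^ (n : ℝ)⁻¹ :=
        Real.rpow_le_rpow (norm_nonneg _) hn (by positivity)
    _ = C ^ (n : ℝ)⁻¹ * β := by
        rw [Real.mul_rpow hC.le (by positivity), Real.pow_rpow_inv_natCast hβ.le hn0]

end RootTest

section SpectralBounds

variable {A : Type*} [NormedRing A] [NormedAlgebra ℂ A] [CompleteSpace A]

theorem exists_isBigO_pow_of_forall_norm_lt (a : A) {c : ℝ} (hc : 0 < c)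
    (h : ∀ z ∈ spectrum ℂ a, ‖z‖ < c) :
    ∃ θ, 0 < θ ∧ θ < c ∧ (fun n => a ^ n) =O[atTop] (θ ^ ·) := by
  cases subsingleton_or_nontrivial A with
  | inl _ =>
    exact ⟨c / 2, by positivity, by linarith,
      (isBigO_zero _ _).congr_left fun n => Subsingleton.elim _ _⟩
  | inr _ =>
    have hlt : spectralRadius ℂ a < ENNReal.ofReal c :=
      spectrum.spectralRadius_lt_of_forall_lt a fun z hz => by
        rw [← NNReal.coe_lt_coe, Real.coe_toNNReal _ hc.le]
        exact h z hz
    obtain ⟨θ, -, hθa, hθc⟩ := ENNReal.lt_iff_exists_real_btwn.mp hlt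
    have hθ : 0 < θ := ENNReal.ofReal_pos.mp (pos_of_gt hθa)
    refine ⟨θ, hθ, (ENNReal.ofReal_lt_ofReal_iff hc).mp hθc,
      isBigO_pow_of_eventually_rpow_inv_lt ?_⟩
    have hgelfand := spectrum.pow_norm_pow_one_div_tendsto_nhds_spectralRadius a
    filter_upwards [hgelfand.eventually_lt_const hθa] with n hn
    simpa [one_div, ENNReal.ofReal_lt_ofReal_iff hθ] using hn

theorem exists_isBigO_inv_pow_of_forall_lt_norm (a : Aˣ) {c : ℝ} (hc : 0 < c)
    (h : ∀ z ∈ spectrum ℂ (a : A), c < ‖z‖) :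
    ∃ ν, c < ν ∧ (fun n => (↑a⁻¹ : A) ^ n) =O[atTop] (ν⁻¹ ^ ·) := by
  have hinv : ∀ z ∈ spectrum ℂ (↑a⁻¹ : A), ‖z‖ < c⁻¹ := by
    intro z hz
    rw [← spectrum.map_inv, Set.mem_inv] at hz
    have hz0 : z ≠ 0 := by rintro rfl; simpa using spectrum.ne_zero_of_mem_of_unit hz
    have := h _ hz
    rwa [norm_inv, lt_inv_comm₀ hc (norm_pos_iff.mpr hz0)] at this
  obtain ⟨θ, hθ, hθc, hO⟩ := exists_isBigO_pow_of_forall_norm_lt _ (inv_pos.mpr hc) hinv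
  exact ⟨θ⁻¹, (lt_inv_comm₀ hθ hc).mp hθc, by simpa using hO⟩

end SpectralBounds


section LinearOrbits

variable {R M : Type*} [Semiring R] [AddCommMonoid M] [Module R M] [TopologicalSpace M]

theorem pow_apply_eq_of_succ_eq (T : M →L[R] M) {v : ℕ → M} (hv : ∀ n, v (n + 1) = T (v n))
    (n m : ℕ) : (T ^ m) (v n) = v (n + m) := by
  induction m with
  | zero => simp
  | succ m ih => rw [pow_succ', mul_apply_eq_comp, ih, ← add_assoc, hv]

theorem coe_pow_apply_of_coe_apply {p : Submodule R M} {T : M →L[R] M} {T' : p →L[R] p}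
    (h : ∀ x, (T' x : M) = T x) (n : ℕ) (x : p) : ((T' ^ n) x : M) = (T ^ n) x := by
  induction n generalizing x with
  | zero => simp
  | succ n ih => rw [pow_succ', mul_apply_eq_comp, h, ih, ← mul_apply_eq_comp, ← pow_succ']

end LinearOrbits

section VariationOfConstants

theorem sum_pow_mul_pow_le {θ η β : ℝ} (hθ : 0 ≤ θ) (hθβ : θ ≤ β) (hη : 0 ≤ η) (hηβ : η < β)
    (n : ℕ) : ∑ k ∈ Finset.range n, θ ^ (n - 1 - k) * η ^ k ≤ β ^ n / (β - η) := by
  have hgeom : (∑ k ∈ Finset.range n, β ^ (n - 1 - k) * η ^ k) * (β - η) = β ^ n - η ^ n := by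
    simp_rw [mul_comm (β ^ _)]
    linear_combination -geom_sum₂_mul η β n
  rw [le_div_iff₀ (sub_pos.mpr hηβ)]
  calc (∑ k ∈ Finset.range n, θ ^ (n - 1 - k) * η ^ k) * (β - η)
      ≤ (∑ k ∈ Finset.range n, β ^ (n - 1 - k) * η ^ k) * (β - η) := by
        gcongr with k
    _ ≤ β ^ n := by linarith [pow_nonneg hη n]

variable {𝕜 E : Type*} [NormedField 𝕜] [SeminormedAddCommGroup E] [NormedSpace 𝕜 E]

theorem eq_pow_apply_add_sum_of_succ_eq_add (T : E →L[𝕜] E) {c e : ℕ → E}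
    (h : ∀ n, c (n + 1) = T (c n) + e n) (n : ℕ) :
    c n = (T ^ n) (c 0) + ∑ k ∈ Finset.range n, (T ^ (n - 1 - k)) (e k) := by
  induction n with
  | zero => simp
  | succ n ih =>
    rw [h, ih, map_add, map_sum, Finset.sum_range_succ, Nat.add_sub_cancel, Nat.sub_self,
      pow_zero, one_apply_eq_self, ← mul_apply_eq_comp, ← pow_succ',
      add_assoc]
    congr 2
    refine Finset.sum_congr rfl fun k hk => ?_
    rw [← mul_apply_eq_comp, ← pow_succ']
    congr 2
    have := Finset.mem_range.mp hk
    omega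

theorem isBigO_of_succ_eq_add (T : E →L[𝕜] E) {c e : ℕ → E} {C θ η β : ℝ} (hC : 0 ≤ C)
    (hθ : 0 ≤ θ) (hθβ : θ ≤ β) (hη : 0 < η) (hηβ : η < β)
    (h : ∀ n, c (n + 1) = T (c n) + e n)
    (hc₀ : ∀ n, ‖(T ^ n) (c 0)‖ ≤ C * θ ^ n * ‖c 0‖)
    (he : ∀ n k, ‖(T ^ n) (e k)‖ ≤ C * θ ^ n * ‖e k‖)
    (heO : e =O[atTop] (η ^ ·)) : c =O[atTop] (β ^ ·) := by
  obtain ⟨Ce, hCe, hCeb⟩ := bound_of_isBigO_nat_atTop heO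
  have heb : ∀ k, ‖e k‖ ≤ Ce * η ^ k := fun k => by
    simpa [abs_of_pos hη] using hCeb (pow_ne_zero k hη.ne')
  refine IsBigO.of_bound (C * ‖c 0‖ + C * Ce / (β - η)) (Eventually.of_forall fun n => ?_)
  have hβ : 0 ≤ β := by linarith
  calc ‖c n‖ ≤ ‖(T ^ n) (c 0)‖ + ∑ k ∈ Finset.range n, ‖(T ^ (n - 1 - k)) (e k)‖ := by
        rw [eq_pow_apply_add_sum_of_succ_eq_add T h n]
        exact (norm_add_le _ _).trans (add_le_add le_rfl (norm_sum_le _ _))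
    _ ≤ C * β ^ n * ‖c 0‖ + C * Ce * ∑ k ∈ Finset.range n, θ ^ (n - 1 - k) * η ^ k := by
        gcongr
        · exact (hc₀ n).trans (by gcongr)
        · rw [Finset.mul_sum]
          refine Finset.sum_le_sum fun k _ => (he _ k).trans ?_
          calc C * θ ^ (n - 1 - k) * ‖e k‖ ≤ C * θ ^ (n - 1 - k) * (Ce * η ^ k) := by
                gcongr; exact heb k
            _ = C * Ce * (θ ^ (n - 1 - k) * η ^ k) := by ring
    _ ≤ C * β ^ n * ‖c 0‖ + C * Ce * (β ^ n / (β - η)) := by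
        gcongr
        exact sum_pow_mul_pow_le hθ hθβ hη.le hηβ n
    _ = (C * ‖c 0‖ + C * Ce / (β - η)) * ‖β ^ n‖ := by
        rw [norm_pow, Real.norm_of_nonneg hβ]; ring

end VariationOfConstants

section TailSeries

variable {𝕜 Y : Type*} [NontriviallyNormedField 𝕜] [NormedAddCommGroup Y] [NormedSpace 𝕜 Y]
  [CompleteSpace Y]

theorem exists_tail_solution_of_mul_eq_one {A B : Y →L[𝕜] Y} (hAB : A * B = 1) {ν η : ℝ}
    (hη : 0 < η) (hην : η < ν) (hB : (fun m => B ^ m) =O[atTop] (ν⁻¹ ^ ·))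
    {g : ℕ → Y} (hg : g =O[atTop] (η ^ ·)) :
    ∃ s : ℕ → Y, s =O[atTop] (η ^ ·) ∧ ∀ n, A (s n) = g n + s (n + 1) := by
  have hν : 0 < ν := hη.trans hην
  obtain ⟨CB, -, hCB⟩ := bound_of_isBigO_nat_atTop hB
  obtain ⟨Cg, -, hCg⟩ := bound_of_isBigO_nat_atTop hg
  have hq : η / ν < 1 := (div_lt_one hν).mpr hην
  have hterm : ∀ n j, ‖(B ^ j) (g (n + j))‖ ≤ CB * Cg * η ^ n * (η / ν) ^ j := fun n j => by
    have hBj : ‖B ^ j‖ ≤ CB * ν⁻¹ ^ j := (hCB (pow_ne_zero j (inv_ne_zero hν.ne'))).trans_eq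
      (by rw [norm_pow, norm_inv, Real.norm_of_nonneg hν.le])
    have hgj : ‖g (n + j)‖ ≤ Cg * η ^ (n + j) := (hCg (pow_ne_zero (n + j) hη.ne')).trans_eq
      (by rw [norm_pow, Real.norm_of_nonneg hη.le])
    calc ‖(B ^ j) (g (n + j))‖ ≤ ‖B ^ j‖ * ‖g (n + j)‖ := (B ^ j).le_opNorm _
      _ ≤ CB * ν⁻¹ ^ j * (Cg * η ^ (n + j)) := by gcongr; exact (norm_nonneg _).trans hBj
      _ = CB * Cg * η ^ n * (η / ν) ^ j := by rw [pow_add, div_pow, div_eq_mul_inv, inv_pow]; ring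
  have hgeom : ∀ n, HasSum (fun j => CB * Cg * η ^ n * (η / ν) ^ j)
      (CB * Cg * η ^ n * (1 - η / ν)⁻¹) := fun n =>
    (hasSum_geometric_of_lt_one (by positivity) hq).mul_left _
  have hsum : ∀ n, Summable fun j => (B ^ j) (g (n + j)) := fun n =>
    (hgeom n).summable.of_norm_bounded (hterm n)
  set w : ℕ → Y := fun n => ∑' j, (B ^ j) (g (n + j))
  have hw : w =O[atTop] (η ^ ·) := by
    refine IsBigO.of_bound (CB * Cg * (1 - η / ν)⁻¹) (Eventually.of_forall fun n => ?_)
    calc ‖w n‖ ≤ CB * Cg * η ^ n * (1 - η / ν)⁻¹ := tsum_of_norm_bounded (hgeom n) (hterm n)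
      _ = CB * Cg * (1 - η / ν)⁻¹ * ‖η ^ n‖ := by
        rw [norm_pow, Real.norm_of_nonneg hη.le]; ring
  have hw_succ : ∀ n, w n = g n + B (w (n + 1)) := fun n => by
    show ∑' j, _ = g n + B (∑' j, _)
    rw [(hsum n).tsum_eq_zero_add, B.map_tsum (hsum (n + 1))]
    simp only [pow_zero, one_apply_eq_self, add_zero, pow_succ', mul_apply_eq_comp,
      add_comm 1, add_assoc]
  refine ⟨fun n => B (w n), (B.isBigO_comp w atTop).trans hw, fun n => ?_⟩
  rw [← mul_apply_eq_comp, hAB, one_apply_eq_self, hw_succ]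

end TailSeries

namespace IsRieszProjection

section

variable {E : Type*} [NormedAddCommGroup E] [NormedSpace ℂ E] {T P : E →L[ℂ] E} {c : ℝ}

theorem apply_apply (hP : IsRieszProjection T P c) (x : E) : P (P x) = P x :=
  DFunLike.congr_fun hP.1 x

theorem apply_apply_comm (hP : IsRieszProjection T P c) (x : E) : P (T x) = T (P x) :=
  DFunLike.congr_fun hP.2.1 x

end

variable {E : Type*} [NormedAddCommGroup E] [NormedSpace ℂ E] [CompleteSpace E]
  {T P : E →L[ℂ] E} {c : ℝ}

theorem exists_norm_pow_apply_sub_le (hP : IsRieszProjection T P c) (hc : 0 < c) :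
    ∃ θ C, 0 < θ ∧ θ < c ∧ 0 ≤ C ∧
      ∀ n x, ‖(T ^ n) (x - P x)‖ ≤ C * θ ^ n * ‖x - P x‖ := by
  obtain ⟨hPP, -, -, T', hT', hσ⟩ := hP
  have hidem : IsIdempotentElem (ContinuousLinearMap.id ℂ E - P) :=
    IsIdempotentElem.one_sub (a := P) hPP
  have := (ContinuousLinearMap.IsIdempotentElem.isClosed_range hidem).completeSpace_coe
  obtain ⟨θ, hθ, hθc, hO⟩ :=
    exists_isBigO_pow_of_forall_norm_lt T' hc fun z hz => (hσ ▸ hz).2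
  obtain ⟨C, hC, hCb⟩ := bound_of_isBigO_nat_atTop hO
  refine ⟨θ, C, hθ, hθc, hC.le, fun n x => ?_⟩
  set ξ : LinearMap.range ((ContinuousLinearMap.id ℂ E - P : E →L[ℂ] E) : E →ₗ[ℂ] E) :=
    ⟨x - P x, x, rfl⟩
  calc ‖(T ^ n) (x - P x)‖ = ‖(T' ^ n) ξ‖ := by
        rw [← Submodule.norm_coe, coe_pow_apply_of_coe_apply hT']
    _ ≤ ‖T' ^ n‖ * ‖x - P x‖ := (T' ^ n).le_opNorm ξ
    _ ≤ C * θ ^ n * ‖x - P x‖ := by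
        gcongr
        simpa [abs_of_pos hθ] using hCb (pow_ne_zero n hθ.ne')

theorem exists_restrict_unit (hP : IsRieszProjection T P c) (hc : 0 < c) :
    ∃ T' : (LinearMap.range (P : E →ₗ[ℂ] E) →L[ℂ] LinearMap.range (P : E →ₗ[ℂ] E))ˣ,
      (∀ x, (T'.val x : E) = T x) ∧
      ∃ ν, c < ν ∧ (fun n => (T'⁻¹).val ^ n) =O[atTop] (ν⁻¹ ^ ·) := by
  obtain ⟨hPP, -, ⟨T', hT', hσ⟩, -⟩ := hP
  have := (ContinuousLinearMap.IsIdempotentElem.isClosed_range hPP).completeSpace_coe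
  have hσ' : ∀ z ∈ spectrum ℂ T', c < ‖z‖ := fun z hz => by rw [hσ] at hz; exact hz.2
  have hunit : IsUnit T' := spectrum.isUnit_of_zero_notMem ℂ fun h0 => by
    have := hσ' 0 h0
    rw [norm_zero] at this
    linarith
  obtain ⟨U, rfl⟩ := hunit
  -- with `A` left to unification, elaborating this term times out
  exact ⟨U, hT', exists_isBigO_inv_pow_of_forall_lt_norm
    (A := LinearMap.range (P : E →ₗ[ℂ] E) →L[ℂ] LinearMap.range (P : E →ₗ[ℂ] E)) U hc hσ'⟩

theorem exists_norm_le_norm_pow_apply (hP : IsRieszProjection T P c) (hc : 0 < c) :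
    ∃ ν C, c < ν ∧ 0 ≤ C ∧ ∀ n y, P y = y → ‖y‖ ≤ C * ν⁻¹ ^ n * ‖(T ^ n) y‖ := by
  obtain ⟨U, hU, ν, hν, hO⟩ := hP.exists_restrict_unit hc
  obtain ⟨C, hC, hCb⟩ := bound_of_isBigO_nat_atTop hO
  have hν0 : 0 < ν := hc.trans hν
  refine ⟨ν, C, hν, hC.le, fun n y hy => ?_⟩
  set ξ : LinearMap.range (P : E →ₗ[ℂ] E) := ⟨y, y, hy⟩
  have hξ : ξ = (U⁻¹.val ^ n) ((U.val ^ n) ξ) := by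
    rw [← mul_apply_eq_comp, ← Units.val_pow_eq_pow_val, ← Units.val_pow_eq_pow_val,
      ← Units.val_mul, inv_pow, inv_mul_cancel, Units.val_one, one_apply_eq_self]
  calc ‖y‖ = ‖(U⁻¹.val ^ n) ((U.val ^ n) ξ)‖ := by rw [← hξ]; rfl
    _ ≤ ‖U⁻¹.val ^ n‖ * ‖(U.val ^ n) ξ‖ := ContinuousLinearMap.le_opNorm _ _
    _ ≤ C * ν⁻¹ ^ n * ‖(T ^ n) y‖ := by
        rw [← Submodule.norm_coe, coe_pow_apply_of_coe_apply hU]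
        gcongr
        simpa [abs_of_pos hν0] using hCb (pow_ne_zero n (inv_ne_zero hν0.ne'))

theorem eq_zero_of_succ_eq (hP : IsRieszProjection T P c) (hc : 0 < c) {y : ℕ → E}
    (hy : ∀ n, y (n + 1) = T (y n)) (hyP : ∀ n, P (y n) = y n) {G : ℝ} (hG : 0 < G)
    (hGc : G ≤ c) (hyO : y =O[atTop] (G ^ ·)) (n : ℕ) : y n = 0 := by
  obtain ⟨ν, C, hν, hC, hback⟩ := hP.exists_norm_le_norm_pow_apply hc
  obtain ⟨Cy, -, hCy⟩ := bound_of_isBigO_nat_atTop hyO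
  have hν0 : 0 < ν := hc.trans hν
  have hlim : Tendsto (fun m => C * Cy * G ^ n * (G / ν) ^ m) atTop (𝓝 0) := by
    simpa using (tendsto_pow_atTop_nhds_zero_of_lt_one (by positivity)
      ((div_lt_one hν0).mpr (hGc.trans_lt hν))).const_mul (C * Cy * G ^ n)
  refine norm_le_zero_iff.mp (ge_of_tendsto' hlim fun m => ?_)
  calc ‖y n‖ ≤ C * ν⁻¹ ^ m * ‖(T ^ m) (y n)‖ := hback m _ (hyP n)
    _ = C * ν⁻¹ ^ m * ‖y (n + m)‖ := by rw [pow_apply_eq_of_succ_eq T hy]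
    _ ≤ C * ν⁻¹ ^ m * (Cy * G ^ (n + m)) := by
        gcongr
        simpa [abs_of_pos hG] using hCy (pow_ne_zero (n + m) hG.ne')
    _ = C * Cy * G ^ n * (G / ν) ^ m := by
        rw [pow_add, div_pow, div_eq_mul_inv, inv_pow]; ring

theorem exists_tail_solution (hP : IsRieszProjection T P c) (hc : 0 < c) {g : ℕ → E}
    (hgP : ∀ k, P (g k) = g k) {η : ℝ} (hη : 0 < η) (hηc : η < c)
    (hg : g =O[atTop] (η ^ ·)) :
    ∃ s : ℕ → E, (∀ n, P (s n) = s n) ∧ s =O[atTop] (η ^ ·) ∧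
      ∀ n, T (s n) = g n + s (n + 1) := by
  obtain ⟨U, hU, ν, hν, hO⟩ := hP.exists_restrict_unit hc
  have := (ContinuousLinearMap.IsIdempotentElem.isClosed_range hP.1).completeSpace_coe
  set g' : ℕ → LinearMap.range (P : E →ₗ[ℂ] E) := fun k => ⟨g k, g k, hgP k⟩
  obtain ⟨s, hsO, hs⟩ := exists_tail_solution_of_mul_eq_one U.mul_inv hη (hηc.trans hν) hO
    ((isBigO_of_le atTop fun k => le_rfl : g' =O[atTop] g).trans hg)
  refine ⟨fun n => s n, fun n => ?_, ((Submodule.subtypeL _).isBigO_comp s atTop).trans hsO,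
    fun n => by rw [← hU, hs]; rfl⟩
  obtain ⟨y, hy⟩ := (s n).2
  show P (s n : E) = s n
  rw [← hy]
  exact hP.apply_apply y

end IsRieszProjection

theorem exists_orbit_isBigO_sub_of_succ_eq_add {E : Type*} [NormedAddCommGroup E]
    [NormedSpace ℂ E] [CompleteSpace E] {T Pd Pdt : E →L[ℂ] E} {β γ G η : ℝ}
    (hPd : IsRieszProjection T Pd β) (hPdt : IsRieszProjection T Pdt γ)
    (hη : 0 < η) (hηβ : η < β) (hβG : β ≤ G) (hGγ : G ≤ γ)
    {u e : ℕ → E} (hu : ∀ n, u (n + 1) = T (u n) + e n)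
    (huO : u =O[atTop] (G ^ ·)) (heO : e =O[atTop] (η ^ ·)) :
    ∃ v : ℕ → E, (∀ n, Pd (v n) = v n) ∧ (∀ n, Pdt (v n) = 0) ∧
      (∀ n, v (n + 1) = T (v n)) ∧ (fun n => u n - v n) =O[atTop] (β ^ ·) := by
  have hβ : 0 < β := hη.trans hηβ
  have hPde : (fun n => Pd (e n)) =O[atTop] (η ^ ·) := (Pd.isBigO_comp e atTop).trans heO
  obtain ⟨s, hsP, hsO, hs⟩ :=
    hPd.exists_tail_solution hβ (fun k => hPd.apply_apply (e k)) hη hηβ hPde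
  set v : ℕ → E := fun n => Pd (u n) + s n
  have hv : ∀ n, v (n + 1) = T (v n) := fun n => by
    simp only [v, hu, map_add, hs, hPd.apply_apply_comm, add_assoc]
  have hvO : v =O[atTop] (G ^ ·) := ((Pd.isBigO_comp u atTop).trans huO).add
    (hsO.trans (isBigO_pow_pow_of_le_left hη.le (hηβ.le.trans hβG)))
  have hPdtv : ∀ n, Pdt (v n) = 0 := hPdt.eq_zero_of_succ_eq (hβ.trans_le (hβG.trans hGγ))
    (fun n => by rw [hv, hPdt.apply_apply_comm]) (fun n => hPdt.apply_apply _)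
    (hβ.trans_le hβG) hGγ ((Pdt.isBigO_comp v atTop).trans hvO)
  obtain ⟨θ, C, hθ, hθβ, hC, hdecay⟩ := hPd.exists_norm_pow_apply_sub_le hβ
  have hstable : (fun n => u n - Pd (u n)) =O[atTop] (β ^ ·) :=
    isBigO_of_succ_eq_add T hC hθ.le hθβ.le hη hηβ
      (fun n => by rw [hu, map_add, map_sub, hPd.apply_apply_comm]; abel)
      (fun n => hdecay n (u 0)) (fun n k => hdecay n (e k)) (heO.sub hPde)
  refine ⟨v, fun n => by simp only [v, map_add, hPd.apply_apply, hsP], hPdtv, hv, ?_⟩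
  refine (hstable.sub (hsO.trans (isBigO_pow_pow_of_le_left hη.le hηβ.le))).congr_left
    fun n => ?_
  simp only [v]
  abel

section NormedOrbits

variable {𝕜 E : Type*} [NontriviallyNormedField 𝕜] [SeminormedAddCommGroup E] [NormedSpace 𝕜 E]

theorem Asymptotics.IsBigO.apply {S : ℕ → E →L[𝕜] E} {u : ℕ → E} {r G : ℝ}
    (hS : S =O[atTop] (r ^ ·)) (hu : u =O[atTop] (G ^ ·)) :
    (fun n => S n (u n)) =O[atTop] ((r * G) ^ ·) :=
  (isBoundedBilinearMap_apply.isBigO_comp.trans (hS.norm_left.mul hu.norm_left)).congr_right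
    fun n => (mul_pow r G n).symm

theorem orbit_ne_zero_of_isBigO_sub {T : E →L[𝕜] E} {u v : ℕ → E} {β L : ℝ} (hβ : 0 < β)
    (hβL : β < L) (hv : ∀ n, v (n + 1) = T (v n))
    (huv : (fun n => u n - v n) =O[atTop] (β ^ ·))
    (hL : Tendsto (fun n => ‖u n‖ ^ (n : ℝ)⁻¹) atTop (𝓝 L)) (n : ℕ) : v n ≠ 0 := by
  intro hvn
  have hv0 : ∀ m ≥ n, v m = 0 := fun m hm => by
    induction m, hm using Nat.le_induction with
    | base => exact hvn
    | succ m _ ih => rw [hv, ih, map_zero]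
  have hu : u =O[atTop] (β ^ ·) :=
    huv.congr' ((eventually_ge_atTop n).mono fun m hm => by simp [hv0 m hm]) .rfl
  exact hβL.not_ge (le_of_tendsto_rpow_inv_of_isBigO hβ hL hu)

end NormedOrbits

theorem convergence_to_asymptotic_equation_general
    (T : X →L[ℂ] X) (ρ d₁ d dt₁ dt : ℝ)
    (hd : d₁ < d) (hdt : dt₁ < dt)
    (Pd Pdt : X →L[ℂ] X)
    (hPd : IsRieszProjection T Pd (ρ - d))
    (hPdt : IsRieszProjection T Pdt (ρ + dt))
    (Sig : ℕ → X →L[ℂ] X) (r : ℝ) (hr : 0 < r)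
    (hrsmall : (ρ + dt) * r < ρ - d)
    (hSig : ∃ C : ℝ, ∀ n : ℕ, ‖Sig n‖ ≤ C * r ^ n)
    (u : ℕ → X)
    (hu : ∀ n : ℕ, u (n + 1) = (T + Sig n) (u n))
    (hlim : ∃ L : ℝ, Tendsto (fun n : ℕ => ‖u n‖ ^ ((n : ℝ))⁻¹) atTop (nhds L)
      ∧ ρ - d₁ ≤ L ∧ L ≤ ρ + dt₁) :
    ∃ uinf : ℕ → X,
      (∀ n, uinf n ≠ 0)
      ∧ (∀ n, uinf n ∈ Set.range (Pd - Pdt))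
      ∧ (∀ n, uinf (n + 1) = ((Pd - Pdt).comp (T.comp (Pd - Pdt))) (uinf n))
      ∧ ∃ C' : ℝ, ∀ n : ℕ, ‖u n - uinf n‖ ≤ C' * (ρ - d) ^ n := by
  obtain ⟨L, hL, hL₁, hL₂⟩ := hlim
  obtain ⟨CS, hCS⟩ := hSig
  obtain ⟨G, hLG, hGdt⟩ : ∃ G, ρ + dt₁ < G ∧ G < ρ + dt := exists_between (by linarith)
  have hL0 : 0 ≤ L := ge_of_tendsto' hL fun n => by positivity
  have hG : 0 < G := by linarith
  have hβ : 0 < ρ - d := (mul_pos (by linarith : 0 < ρ + dt) hr).trans hrsmall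
  have huO : u =O[atTop] (G ^ ·) :=
    isBigO_pow_of_eventually_rpow_inv_lt (hL.eventually_lt_const (by linarith))
  have hSigO : Sig =O[atTop] (r ^ ·) :=
    .of_bound CS (.of_forall fun n => by simpa [abs_of_pos hr] using hCS n)
  obtain ⟨v, hvPd, hvPdt, hv, huv⟩ := exists_orbit_isBigO_sub_of_succ_eq_add hPd hPdt
    (by positivity : 0 < r * G) (by nlinarith) (by linarith) (by linarith)
    (fun n => by rw [hu, add_apply]) huO (hSigO.apply huO)
  have hQv : ∀ n, (Pd - Pdt) (v n) = v n := fun n => by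
    rw [sub_apply, hvPd, hvPdt, sub_zero]
  obtain ⟨C, -, hC⟩ := bound_of_isBigO_nat_atTop huv
  refine ⟨v, orbit_ne_zero_of_isBigO_sub hβ (by linarith) hv huv hL, fun n => ⟨v n, hQv n⟩,
    fun n => by rw [ContinuousLinearMap.comp_apply, ContinuousLinearMap.comp_apply, hQv, ← hv, hQv],
    C, fun n => by simpa [abs_of_pos hβ] using hC (pow_ne_zero n hβ.ne')⟩

/-- **Convergence to a solution of the asymptotic equation.**
Assume `∅ ≠ σ(T) ∩ {ρ−δ ≤ |z| ≤ ρ+δ̃} ⊆ {ρ−δ₁ < |z| < ρ+δ̃₁}` with `0 < δ₁ < δ`,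
`0 < δ̃₁ < δ̃`, and that `T` admits a shifted exponential dichotomy with gap
`[ρ+δ̃₁, ρ+δ*]`, `δ* > δ̃`.  Let `Q_{ρ−δ} = I − P_{ρ−δ}` and `Q_{ρ+δ̃} = I − P_{ρ+δ̃}` be
Riesz projections and `T_ρ = (Q_{ρ+δ̃} − Q_{ρ−δ}) T (Q_{ρ+δ̃} − Q_{ρ−δ})`.  If
`u(n+1) = (T + Σ(n)) u(n)` with `‖Σ(n)‖ = O(rⁿ)`, `(ρ+δ̃) r < ρ−δ`, and
`ρ−δ₁ ≤ lim ‖u(n)‖^{1/n} ≤ ρ+δ̃₁`, then there is a nowhere-vanishing sequence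
`u_∞(n) ∈ R(Q_{ρ+δ̃} − Q_{ρ−δ})` with `u_∞(n+1) = T_ρ u_∞(n)` and
`‖u(n) − u_∞(n)‖ = O((ρ−δ)ⁿ)` as `n → +∞`. -/
theorem convergence_to_asymptotic_equation
    (T : X →L[ℂ] X) (ρ d₁ d dt₁ dt ds : ℝ)
    (hρ : 0 < ρ) (hd₁ : 0 < d₁) (hd : d₁ < d) (hdt₁ : 0 < dt₁) (hdt : dt₁ < dt)
    (hds : dt < ds)
    (hspec_ne :
      (spectrum ℂ T ∩
        {z : ℂ | ρ - d ≤ ‖z‖ ∧ ‖z‖ ≤ ρ + dt}).Nonempty)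
    (hspec_sub :
      spectrum ℂ T ∩ {z : ℂ | ρ - d ≤ ‖z‖ ∧ ‖z‖ ≤ ρ + dt}
        ⊆ {z : ℂ | ρ - d₁ < ‖z‖ ∧ ‖z‖ < ρ + dt₁})
    (K : ℝ) (Pgap : X →L[ℂ] X)
    (hdich : ConstShiftedDichotomy T (ρ + dt₁) (ρ + ds) K Pgap)
    (Pd Pdt : X →L[ℂ] X)
    (hPd : IsRieszProjection T Pd (ρ - d))
    (hPdt : IsRieszProjection T Pdt (ρ + dt))
    (Sig : ℕ → X →L[ℂ] X) (r : ℝ) (hr : 0 < r)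
    (hrsmall : (ρ + dt) * r < ρ - d)
    (hSig : ∃ C : ℝ, ∀ n : ℕ, ‖Sig n‖ ≤ C * r ^ n)
    (u : ℕ → X)
    (hu : ∀ n : ℕ, u (n + 1) = (T + Sig n) (u n))
    (hlim : ∃ L : ℝ, Tendsto (fun n : ℕ => ‖u n‖ ^ ((n : ℝ))⁻¹) atTop (nhds L)
      ∧ ρ - d₁ ≤ L ∧ L ≤ ρ + dt₁) :
    ∃ uinf : ℕ → X,
      (∀ n, uinf n ≠ 0)
      ∧ (∀ n, uinf n ∈ Set.range (Pd - Pdt))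
      ∧ (∀ n, uinf (n + 1) = ((Pd - Pdt).comp (T.comp (Pd - Pdt))) (uinf n))
      ∧ ∃ C' : ℝ, ∀ n : ℕ, ‖u n - uinf n‖ ≤ C' * (ρ - d) ^ n :=
  convergence_to_asymptotic_equation_general T ρ d₁ d dt₁ dt hd hdt Pd Pdt hPd hPdt Sig r hr hrsmall
    hSig u hu hlim
end
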